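/- arXiv:1706.04533 — 14 statements merged into one kernel-verified Lean document; each statement's English description precedes it below -/
import Mathlib

section
/- In an ordered ring (R, ≤), satisfying axioms (O1), (O3), (O4) and the relation being reflexive, transitive, total, axiom (O2) (xy ≤ 0 ⇒ x ≤ 0 or y ≤ 0) holds if and only if axiom (O2') (xy ∼ 0 ⇒ x ∼ 0 or y ∼ 0) holds, where x ∼ y means x ≤ y and y ≤ x. -/
/-- In a ring with a reflexive, transitive, total relation satisfying (O1), (O3), (O4),
axiom (O2) holds iff axiom (O2') holds. -/
theorem O2_iff_O2'
    {R : Type} [CommRing R] (le : R → R → Prop)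
    (hrefl : ∀ x : R, le x x)
    (htrans : ∀ x y z : R, le x y → le y z → le x z)
    (htotal : ∀ x y : R, le x y ∨ le y x)
    (hO1 : le 0 1 ∧ ¬ le 1 0)
    (hO3 : ∀ x y z : R, le x y → le 0 z → le (x * z) (y * z))
    (hO4 : ∀ x y z : R, le x y → le (x + z) (y + z)) :
    (∀ x y : R, le (x * y) 0 → le x 0 ∨ le y 0) ↔
      (∀ x y : R, (le (x * y) 0 ∧ le 0 (x * y)) →
        (le x 0 ∧ le 0 x) ∨ (le y 0 ∧ le 0 y)) := by
  have lneg : ∀ a : R, le 0 a → le (-a) 0 := fun a h => by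
    have := hO4 0 a (-a) h; simpa using this
  have conv : ∀ a : R, le (-a) 0 → le 0 a := fun a h => by
    have := hO4 (-a) 0 a h; simpa using this
  constructor
  · intro hO2 x y ⟨h1, h2⟩
    have hxy' : le ((-x) * y) 0 := by
      have := lneg _ h2; simpa [neg_mul] using this
    have hxy'' : le (x * (-y)) 0 := by
      have := lneg _ h2; simpa [mul_neg] using this
    have hxy''' : le ((-x) * (-y)) 0 := by
      simpa [neg_mul, mul_neg] using h1
    have d1 := hO2 x y h1
    have d2 : le 0 x ∨ le y 0 := (hO2 _ _ hxy').imp (conv x) id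
    have d3 : le x 0 ∨ le 0 y := (hO2 _ _ hxy'').imp id (conv y)
    have d4 : le 0 x ∨ le 0 y := (hO2 _ _ hxy''').imp (conv x) (conv y)
    tauto
  · intro hO2' x y hxy
    rcases htotal x 0 with hx | hx
    · exact Or.inl hx
    rcases htotal y 0 with hy | hy
    · exact Or.inr hy
    have h0 : le 0 (x * y) := by
      have := hO3 0 x y hx hy; simpa using this
    rcases hO2' x y ⟨hxy, h0⟩ with ⟨h, _⟩ | ⟨h, _⟩
    · exact Or.inl h
    · exact Or.inr h
end

section
/- If (R, ≤) is an ordered ring, then the equivalence class E₀ = {x ∈ R : x ∼ 0} is a prime ideal of R. -/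
/-- If `(R, ≤)` is an ordered ring, then `E₀ = {x : x ∼ 0}` is a prime ideal of `R`. -/
theorem orderedRing_support_isPrime
    {R : Type} [CommRing R] (le : R → R → Prop)
    (hrefl : ∀ x : R, le x x)
    (htrans : ∀ x y z : R, le x y → le y z → le x z)
    (htotal : ∀ x y : R, le x y ∨ le y x)
    (hO1 : le 0 1 ∧ ¬ le 1 0)
    (hO2 : ∀ x y : R, le (x * y) 0 → le x 0 ∨ le y 0)
    (hO3 : ∀ x y z : R, le x y → le 0 z → le (x * z) (y * z))
    (hO4 : ∀ x y z : R, le x y → le (x + z) (y + z)) :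
    ∃ I : Ideal R, I.IsPrime ∧ ∀ x : R, x ∈ I ↔ (le x 0 ∧ le 0 x) := by
  -- negation flips the order
  have hneg : ∀ a : R, le a 0 → le 0 (-a) := by
    intro a h
    have := hO4 a 0 (-a) h
    simpa using this
  have hneg' : ∀ a : R, le 0 a → le (-a) 0 := by
    intro a h
    have := hO4 0 a (-a) h
    simpa using this
  -- membership x ∼ 0 is closed under multiplication by anything
  have hmul : ∀ x c : R, le x 0 → le 0 x → le (x * c) 0 ∧ le 0 (x * c) := by
    intro x c hx0 h0x
    rcases htotal 0 c with hc | hc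
    · constructor
      · have := hO3 x 0 c hx0 hc; simpa using this
      · have := hO3 0 x c h0x hc; simpa using this
    · have hc' : le 0 (-c) := hneg c hc
      constructor
      · have := hO3 (-x) 0 (-c) (hneg' x h0x) hc'
        simpa using this
      · have := hO3 0 (-x) (-c) (hneg x hx0) hc'
        simpa using this
  refine ⟨{ carrier := {x | le x 0 ∧ le 0 x}
            zero_mem' := ⟨hrefl 0, hrefl 0⟩
            add_mem' := ?_
            smul_mem' := ?_ }, ⟨?_, ?_⟩, fun x => Iff.rfl⟩
  · rintro a b ⟨ha0, h0a⟩ ⟨hb0, h0b⟩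
    constructor
    · have h1 : le (a + b) (0 + b) := hO4 a 0 b ha0
      rw [zero_add] at h1
      exact htrans _ _ _ h1 hb0
    · have h1 : le (0 + b) (a + b) := hO4 0 a b h0a
      rw [zero_add] at h1
      exact htrans _ _ _ h0b h1
  · rintro c a ⟨ha0, h0a⟩
    have := hmul a c ha0 h0a
    simpa [smul_eq_mul, mul_comm] using this
  · -- I ≠ ⊤
    intro h
    have h1 : (1 : R) ∈ ({x | le x 0 ∧ le 0 x} : Set R) := by
      rw [Ideal.eq_top_iff_one] at h
      exact h
    exact hO1.2 h1.1
  · -- prime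
    intro x y hxy
    obtain ⟨hxy0, h0xy⟩ := hxy
    have hneg_xy : le ((-x) * y) 0 := by
      have := hneg' _ h0xy
      simpa [neg_mul] using this
    have hneg_xy' : le (x * (-y)) 0 := by
      have := hneg' _ h0xy
      simpa [mul_neg] using this
    have hA := hO2 x y hxy0
    have hB := hO2 (-x) y hneg_xy
    have hC := hO2 x (-y) hneg_xy'
    have hD : le (-x) 0 ∨ le (-y) 0 := by
      apply hO2
      simpa [neg_mul_neg] using hxy0
    rcases hB with hB | hB
    · -- 0 ≤ x
      have h0x : le 0 x := by simpa using hneg _ hB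
      rcases hA with hA | hA
      · exact Or.inl ⟨hA, h0x⟩
      · rcases hC with hC | hC
        · exact Or.inl ⟨hC, h0x⟩
        · exact Or.inr ⟨hA, by simpa using hneg _ hC⟩
    · -- y ≤ 0
      rcases hC with hC | hC
      · -- x ≤ 0 and y ≤ 0; use hD
        rcases hD with hD | hD
        · exact Or.inl ⟨hC, by simpa using hneg _ hD⟩
        · exact Or.inr ⟨hB, by simpa using hneg _ hD⟩
      · exact Or.inr ⟨hB, by simpa using hneg _ hC⟩
end

section
/- In a quasi-ordered ring (R, ⪯), axiom (QR5) implies axiom (QR2): for all x, y ∈ R, if xy ⪯ 0 then x ⪯ 0 or y ⪯ 0. -/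
/-- In a quasi-ordered ring, axiom (QR5) implies axiom (QR2). -/
theorem QR5_implies_QR2
    {R : Type} [CommRing R] (le : R → R → Prop)
    (hrefl : ∀ x : R, le x x)
    (htrans : ∀ x y z : R, le x y → le y z → le x z)
    (htotal : ∀ x y : R, le x y ∨ le y x)
    (hQR1 : le 0 1 ∧ ¬ le 1 0)
    (hQR3 : ∀ x y z : R, le x y → le 0 z → le (x * z) (y * z))
    (hQR4 : ∀ x y z : R, le x y → ¬ (le z y ∧ le y z) → le (x + z) (y + z))
    (hQR5 : ∀ x y z : R, le 0 z → ¬ le z 0 → le (x * z) (y * z) → le x y) :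
    ∀ x y : R, le (x * y) 0 → le x 0 ∨ le y 0 := by
  intro x y h
  by_cases hy : le y 0
  · exact Or.inr hy
  · left
    have h0y : le 0 y := (htotal 0 y).resolve_right hy
    exact hQR5 x 0 y h0y hy (by rwa [zero_mul])
end

section
/- In a quasi-ordered ring (R, ⪯): if x ≁ 0 and y ∼ 0, then x + y ∼ x. In particular, if y ∼ 0 then -y ∼ 0. -/
/-- In a quasi-ordered ring: if `x ≁ 0` and `y ∼ 0`, then `x + y ∼ x`; in particular
`y ∼ 0` implies `-y ∼ 0`. -/
theorem quasiOrdered_add_equiv_zero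
    {R : Type} [CommRing R] (le : R → R → Prop)
    (hrefl : ∀ x : R, le x x)
    (htrans : ∀ x y z : R, le x y → le y z → le x z)
    (htotal : ∀ x y : R, le x y ∨ le y x)
    (hQR1 : le 0 1 ∧ ¬ le 1 0)
    (hQR2 : ∀ x y : R, le (x * y) 0 → le x 0 ∨ le y 0)
    (hQR3 : ∀ x y z : R, le x y → le 0 z → le (x * z) (y * z))
    (hQR4 : ∀ x y z : R, le x y → ¬ (le z y ∧ le y z) → le (x + z) (y + z))
    (hQR5 : ∀ x y z : R, le 0 z → ¬ le z 0 → le (x * z) (y * z) → le x y) :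
    (∀ x y : R, ¬ (le x 0 ∧ le 0 x) → (le y 0 ∧ le 0 y) →
      (le (x + y) x ∧ le x (x + y))) ∧
    (∀ y : R, (le y 0 ∧ le 0 y) → (le (-y) 0 ∧ le 0 (-y))) := by
  have main : ∀ x y : R, ¬ (le x 0 ∧ le 0 x) → (le y 0 ∧ le 0 y) →
      (le (x + y) x ∧ le x (x + y)) := by
    intro x y hx ⟨hy0, h0y⟩
    have hnxy : ¬ (le x y ∧ le y x) := by
      rintro ⟨hxy, hyx⟩
      exact hx ⟨htrans x y 0 hxy hy0, htrans 0 y x h0y hyx⟩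
    have h1 : le (y + x) (0 + x) := hQR4 y 0 x hy0 hx
    have h2 : le (0 + x) (y + x) := hQR4 0 y x h0y hnxy
    rw [zero_add, add_comm y x] at h1 h2
    exact ⟨h1, h2⟩
  refine ⟨main, fun y hy => ?_⟩
  by_contra h
  have := main (-y) y h hy
  rw [neg_add_cancel] at this
  exact h ⟨this.2, this.1⟩
end

section
/- In a quasi-ordered ring (R, ⪯), for all x, y, z ∈ R: if z ≁ 0 and xz ∼ yz, then x ∼ y. -/
/-- In a quasi-ordered ring: if `z ≁ 0` and `xz ∼ yz`, then `x ∼ y`. -/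
theorem quasiOrdered_cancel_equiv
    {R : Type} [CommRing R] (le : R → R → Prop)
    (hrefl : ∀ x : R, le x x)
    (htrans : ∀ x y z : R, le x y → le y z → le x z)
    (htotal : ∀ x y : R, le x y ∨ le y x)
    (hQR1 : le 0 1 ∧ ¬ le 1 0)
    (hQR2 : ∀ x y : R, le (x * y) 0 → le x 0 ∨ le y 0)
    (hQR3 : ∀ x y z : R, le x y → le 0 z → le (x * z) (y * z))
    (hQR4 : ∀ x y z : R, le x y → ¬ (le z y ∧ le y z) → le (x + z) (y + z))
    (hQR5 : ∀ x y z : R, le 0 z → ¬ le z 0 → le (x * z) (y * z) → le x y) :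
    ∀ x y z : R, ¬ (le z 0 ∧ le 0 z) →
      (le (x * z) (y * z) ∧ le (y * z) (x * z)) → (le x y ∧ le y x) := by
  -- Lemma N1: u ≺ 0 → -u ≻ 0
  have N1 : ∀ u : R, le u 0 → ¬ le 0 u → ¬ le (-u) 0 ∧ le 0 (-u) := by
    intro u hu hu'
    have h : ¬ le (-u) 0 := by
      intro h
      have h2 := hQR4 (-u) 0 u h (fun hc => hu' hc.2)
      rw [neg_add_cancel, zero_add] at h2
      exact hu' h2
    exact ⟨h, (htotal (-u) 0).resolve_left h⟩
  intro x y z hz hprod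
  obtain ⟨h1, h2⟩ := hprod
  rcases htotal z 0 with hzle | hzge
  · -- z ≺ 0 case
    have hznotpos : ¬ le 0 z := fun h => hz ⟨hzle, h⟩
    -- N2: u ≻ 0 → -u ≺ 0  (uses the existence of the negative element z)
    have N2 : ∀ u : R, le 0 u → ¬ le u 0 → le (-u) 0 ∧ ¬ le 0 (-u) := by
      intro u hu hu'
      have hneg : le (-u) 0 := by
        by_contra hc
        have hpos : le 0 (-u) := (htotal (-u) 0).resolve_left hc
        have ha : le (z * u) 0 := by
          have := hQR3 z 0 u hzle hu
          rwa [zero_mul] at this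
        have hb : le (-(z * u)) 0 := by
          have := hQR3 z 0 (-u) hzle hpos
          rwa [zero_mul, mul_neg] at this
        have hc3 : le 0 (z * u) := by
          by_contra h3
          exact (N1 (z * u) ha h3).1 hb
        have h4 : le 0 z := hQR5 0 z u hu hu' (by rwa [zero_mul])
        exact hznotpos h4
      refine ⟨hneg, ?_⟩
      intro hc
      have hne : ¬ (le u (-u) ∧ le (-u) u) :=
        fun h => hu' (htrans u (-u) 0 h.1 hneg)
      have h5 := hQR4 0 (-u) u hc hne
      rw [neg_add_cancel, zero_add] at h5
      exact hu' h5
    -- N0: u ∼ 0 → -u ∼ 0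
    have N0 : ∀ u : R, le u 0 → le 0 u → le (-u) 0 ∧ le 0 (-u) := by
      intro u hu1 hu2
      rcases htotal (-u) 0 with h | h
      · refine ⟨h, ?_⟩
        by_contra hc
        have h5 := (N1 (-u) h hc).1
        rw [neg_neg] at h5
        exact h5 hu1
      · refine ⟨?_, h⟩
        by_contra hc
        have h5 := (N2 (-u) h hc).2
        rw [neg_neg] at h5
        exact h5 hu2
    -- Key cancellation lemma for negative z
    have key : ∀ a b : R, le (a * z) (b * z) → le (b * z) (a * z) → le a b := by
      intro a b hab hba
      by_contra hn
      have hba' : le b a := (htotal a b).resolve_left hn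
      have hw := N1 z hzle hznotpos
      -- h1 : -(b z) ⪯ -(a z), strictly
      have hab1 : le (-(b * z)) (-(a * z)) := by
        have := hQR3 b a (-z) hba' hw.2
        rwa [mul_neg, mul_neg] at this
      have hab2 : ¬ le (-(a * z)) (-(b * z)) := by
        intro h
        apply hn
        refine hQR5 a b (-z) hw.2 hw.1 ?_
        rwa [mul_neg, mul_neg]
      -- -(a z + b z) ∼ a z
      have hca : le (-(a * z + b * z)) (a * z) ∧ le (a * z) (-(a * z + b * z)) := by
        by_contra hc
        have h5 := hQR4 (b * z) (a * z) (-(a * z + b * z)) hba hc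
        have e1 : b * z + -(a * z + b * z) = -(a * z) := by ring
        have e2 : a * z + -(a * z + b * z) = -(b * z) := by ring
        rw [e1, e2] at h5
        exact hab2 h5
      -- -(a z + b z) ∼ b z
      have hcb : le (-(a * z + b * z)) (b * z) ∧ le (b * z) (-(a * z + b * z)) :=
        ⟨htrans _ _ _ hca.1 hab, htrans _ _ _ hba hca.2⟩
      -- Cancel -z (strictly positive) to get element-level relations.
      have hs1 : le (a + b) (-a) := by
        refine hQR5 (a + b) (-a) (-z) hw.2 hw.1 ?_
        have e1 : (a + b) * -z = -(a * z + b * z) := by ring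
        have e2 : (-a) * -z = a * z := by ring
        rw [e1, e2]; exact hca.1
      have hs2 : le (-a) (a + b) := by
        refine hQR5 (-a) (a + b) (-z) hw.2 hw.1 ?_
        have e1 : (a + b) * -z = -(a * z + b * z) := by ring
        have e2 : (-a) * -z = a * z := by ring
        rw [e1, e2]; exact hca.2
      have hpq1 : le (-a) (-b) := by
        refine hQR5 (-a) (-b) (-z) hw.2 hw.1 ?_
        have e1 : (-a) * -z = a * z := by ring
        have e2 : (-b) * -z = b * z := by ring
        rw [e1, e2]; exact hab
      have hpq2 : le (-b) (-a) := by
        refine hQR5 (-b) (-a) (-z) hw.2 hw.1 ?_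
        have e1 : (-a) * -z = a * z := by ring
        have e2 : (-b) * -z = b * z := by ring
        rw [e1, e2]; exact hba
      -- trichotomy on the sign of a
      by_cases h0a : le 0 a
      · by_cases ha0 : le a 0
        · -- a ∼ 0
          have hb0 : le b 0 := htrans b a 0 hba' ha0
          have hbs : ¬ le 0 b := fun h => hn (htrans a 0 b ha0 h)
          have hnb := N1 b hb0 hbs
          have hma1 : le 0 (-a) := htrans 0 (-b) (-a) hnb.2 hpq2
          have hma2 : ¬ le (-a) 0 := fun h => hnb.1 (htrans (-b) (-a) 0 hpq2 h)
          exact hma2 (N0 a ha0 h0a).1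
        · -- a ≻ 0
          have hna := N2 a h0a ha0
          have hsum_notpos : ¬ le 0 (a + b) :=
            fun h => hna.2 (htrans 0 (a + b) (-a) h hs1)
          have hb1 : le (-b) 0 := htrans (-b) (-a) 0 hpq2 hna.1
          have hb2 : ¬ le 0 (-b) := fun h => hna.2 (htrans 0 (-b) (-a) h hpq2)
          have hb := N1 (-b) hb1 hb2
          rw [neg_neg] at hb
          have h5 := hQR4 0 a b h0a (fun h => hn h.2)
          rw [zero_add] at h5
          exact hsum_notpos (htrans 0 b (a + b) hb.2 h5)
      · -- a ≺ 0
        have ha0 : le a 0 := (htotal a 0).resolve_right h0a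
        have hna := N1 a ha0 h0a
        have hsum_notneg : ¬ le (a + b) 0 :=
          fun h => hna.1 (htrans (-a) (a + b) 0 hs2 h)
        have hb1 : le 0 (-b) := htrans 0 (-a) (-b) hna.2 hpq1
        have hb2 : ¬ le (-b) 0 := fun h => hna.1 (htrans (-a) (-b) 0 hpq1 h)
        have hb := N2 (-b) hb1 hb2
        rw [neg_neg] at hb
        have h5 := hQR4 a 0 b ha0 (fun h => hb.2 h.2)
        rw [zero_add] at h5
        exact hsum_notneg (htrans (a + b) b 0 h5 hb.1)
    exact ⟨key x y h1 h2, key y x h2 h1⟩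
  · -- z ≻ 0 case: QR5 directly
    have hznotneg : ¬ le z 0 := fun h => hz ⟨h, hzge⟩
    exact ⟨hQR5 x y z hzge hznotneg h1, hQR5 y x z hzge hznotneg h2⟩
end

section
/- The support E₀ = {x ∈ R : x ∼ 0} of a quasi-ordered ring (R, ⪯) is a prime ideal of R. -/
/-- The support `E₀ = {x : x ∼ 0}` of a quasi-ordered ring is a prime ideal. -/
theorem quasiOrdered_support_isPrime
    {R : Type} [CommRing R] (le : R → R → Prop)
    (hrefl : ∀ x : R, le x x)
    (htrans : ∀ x y z : R, le x y → le y z → le x z)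
    (htotal : ∀ x y : R, le x y ∨ le y x)
    (hQR1 : le 0 1 ∧ ¬ le 1 0)
    (hQR2 : ∀ x y : R, le (x * y) 0 → le x 0 ∨ le y 0)
    (hQR3 : ∀ x y z : R, le x y → le 0 z → le (x * z) (y * z))
    (hQR4 : ∀ x y z : R, le x y → ¬ (le z y ∧ le y z) → le (x + z) (y + z))
    (hQR5 : ∀ x y z : R, le 0 z → ¬ le z 0 → le (x * z) (y * z) → le x y) :
    ∃ I : Ideal R, I.IsPrime ∧ ∀ x : R, x ∈ I ↔ (le x 0 ∧ le 0 x) := by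
  -- Claim B : a ⪯ 0 → 0 ⪯ -a
  have claimB : ∀ a : R, le a 0 → le 0 (-a) := by
    intro a ha
    by_cases h : le (-a) 0 ∧ le 0 (-a)
    · exact h.2
    · have := hQR4 a 0 (-a) ha h
      simpa using this
  -- Claim D : -a ∼ 0 → a ∼ 0
  have claimD : ∀ a : R, le (-a) 0 → le 0 (-a) → le a 0 ∧ le 0 a := by
    intro a h1 h2
    constructor
    · by_cases h : le a (-a) ∧ le (-a) a
      · exact htrans a (-a) 0 h.1 h1
      · have := hQR4 0 (-a) a h2 h
        simpa using this
    · by_cases h : le a 0 ∧ le 0 a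
      · exact h.2
      · have := hQR4 (-a) 0 a h1 h
        simpa using this
  -- negation
  have negE : ∀ a : R, le a 0 → le 0 a → le (-a) 0 ∧ le 0 (-a) := by
    intro a h1 h2
    have := claimD (-a) (by simpa using h1) (by simpa using h2)
    simpa using this
  -- multiplication by an arbitrary element
  have mulE : ∀ a z : R, le a 0 → le 0 a → le (a * z) 0 ∧ le 0 (a * z) := by
    have case1 : ∀ a z : R, le a 0 → le 0 a → le 0 z →
        le (a * z) 0 ∧ le 0 (a * z) := by
      intro a z h1 h2 hz
      constructor
      · have := hQR3 a 0 z h1 hz; simpa using this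
      · have := hQR3 0 a z h2 hz; simpa using this
    intro a z h1 h2
    by_cases hz : le 0 z
    · exact case1 a z h1 h2 hz
    · have hz0 : le z 0 := (htotal z 0).resolve_right hz
      have hnz : le 0 (-z) := claimB z hz0
      have h := case1 a (-z) h1 h2 hnz
      have e : a * (-z) = -(a * z) := by ring
      rw [e] at h
      exact claimD (a * z) h.1 h.2
  -- addition
  have addE : ∀ a b : R, le a 0 → le 0 a → le b 0 → le 0 b →
      le (a + b) 0 ∧ le 0 (a + b) := by
    intro a b ha1 ha2 hb1 hb2
    obtain ⟨hna1, hna2⟩ := negE a ha1 ha2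
    constructor
    · by_cases h : le (a + b) (-a) ∧ le (-a) (a + b)
      · exact htrans (a + b) (-a) 0 h.1 hna1
      · have := hQR4 0 (-a) (a + b) hna2 h
        have e : -a + (a + b) = b := by ring
        rw [zero_add, e] at this
        exact htrans (a + b) b 0 this hb1
    · by_cases h : le (a + b) 0 ∧ le 0 (a + b)
      · exact h.2
      · have := hQR4 (-a) 0 (a + b) hna1 h
        have e : -a + (a + b) = b := by ring
        rw [zero_add, e] at this
        exact htrans 0 b (a + b) hb2 this
  -- primality key step
  have key : ∀ x y : R, le (x * y) 0 → le 0 (x * y) →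
      (le x 0 ∧ le 0 x) ∨ (le y 0 ∧ le 0 y) := by
    have aux : ∀ x y : R, le x 0 → ¬ le 0 x → le (x * y) 0 → le 0 (x * y) →
        le y 0 ∧ le 0 y := by
      intro x y hx hx' h1 h2
      have hnx : le 0 (-x) := claimB x hx
      have hnx' : ¬ le (-x) 0 := by
        intro hc
        exact hx' (claimD x hc hnx).2
      obtain ⟨g1, g2⟩ := negE (x * y) h1 h2
      have e : -(x * y) = y * (-x) := by ring
      rw [e] at g1 g2
      constructor
      · exact hQR5 y 0 (-x) hnx hnx' (by simpa using g1)
      · exact hQR5 0 y (-x) hnx hnx' (by simpa using g2)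
    intro x y h1 h2
    rcases hQR2 x y h1 with hx | hy
    · by_cases hx' : le 0 x
      · exact Or.inl ⟨hx, hx'⟩
      · exact Or.inr (aux x y hx hx' h1 h2)
    · by_cases hy' : le 0 y
      · exact Or.inr ⟨hy, hy'⟩
      · refine Or.inl (aux y x hy hy' ?_ ?_) <;> rwa [mul_comm]
  refine ⟨{ carrier := {a : R | le a 0 ∧ le 0 a}
            add_mem' := fun {a b} ha hb => addE a b ha.1 ha.2 hb.1 hb.2
            zero_mem' := ⟨hrefl 0, hrefl 0⟩
            smul_mem' := fun c x hx => by
              simpa [smul_eq_mul, mul_comm] using mulE x c hx.1 hx.2 },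
          ⟨?_, ?_⟩, fun x => Iff.rfl⟩
  · rw [Ideal.ne_top_iff_one]
    intro h
    exact hQR1.2 h.1
  · intro a b hab
    exact key a b hab.1 hab.2
end

section
/- If (R, ⪯) is a quasi-ordered ring and R is a field, then (R, ⪯) is a quasi-ordered field in the sense of Fakhruddin; in particular x ∼ 0 implies x = 0. -/
/-- A quasi-ordered ring which is a field is a quasi-ordered field in the sense of
Fakhruddin; in particular `x ∼ 0` implies `x = 0`. -/
theorem quasiOrdered_field
    {R : Type} [Field R] (le : R → R → Prop)
    (hrefl : ∀ x : R, le x x)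
    (htrans : ∀ x y z : R, le x y → le y z → le x z)
    (htotal : ∀ x y : R, le x y ∨ le y x)
    (hQR1 : le 0 1 ∧ ¬ le 1 0)
    (hQR2 : ∀ x y : R, le (x * y) 0 → le x 0 ∨ le y 0)
    (hQR3 : ∀ x y z : R, le x y → le 0 z → le (x * z) (y * z))
    (hQR4 : ∀ x y z : R, le x y → ¬ (le z y ∧ le y z) → le (x + z) (y + z))
    (hQR5 : ∀ x y z : R, le 0 z → ¬ le z 0 → le (x * z) (y * z) → le x y) :
    -- (Q1)
    (∀ x : R, (le x 0 ∧ le 0 x) → x = 0) ∧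
    -- (Q2)
    (∀ x y z : R, le x y → le 0 z → le (x * z) (y * z)) ∧
    -- (Q3)
    (∀ x y z : R, le x y → ¬ (le z y ∧ le y z) → le (x + z) (y + z)) := by
  refine ⟨?_, hQR3, hQR4⟩
  intro x ⟨hx0, h0x⟩
  by_contra hx
  rcases htotal x⁻¹ 0 with h | h
  · have := hQR3 x⁻¹ 0 x h h0x
    rw [inv_mul_cancel₀ hx, zero_mul] at this
    exact hQR1.2 this
  · have := hQR3 x 0 x⁻¹ hx0 h
    rw [mul_inv_cancel₀ hx, zero_mul] at this
    exact hQR1.2 this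
end

section
/- Let (R, ⪯) be a quasi-ordered ring with support E₀. Then the relation ⪯' on the quotient ring R/E₀ defined by x̄ ⪯' ȳ :⇔ x ⪯ y is well-defined, makes (R/E₀, ⪯') a quasi-ordered ring, and satisfies x̄ ∼ 0 ⇔ x̄ = 0. -/
/-- The quasi-order of a quasi-ordered ring descends to a well-defined quasi-order
on the quotient `R/E₀`, making it a quasi-ordered ring whose support is `{0}`. -/
theorem quasiOrdered_quotient
    {R : Type} [CommRing R] (le : R → R → Prop)
    (hrefl : ∀ x : R, le x x)
    (htrans : ∀ x y z : R, le x y → le y z → le x z)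
    (htotal : ∀ x y : R, le x y ∨ le y x)
    (hQR1 : le 0 1 ∧ ¬ le 1 0)
    (hQR2 : ∀ x y : R, le (x * y) 0 → le x 0 ∨ le y 0)
    (hQR3 : ∀ x y z : R, le x y → le 0 z → le (x * z) (y * z))
    (hQR4 : ∀ x y z : R, le x y → ¬ (le z y ∧ le y z) → le (x + z) (y + z))
    (hQR5 : ∀ x y z : R, le 0 z → ¬ le z 0 → le (x * z) (y * z) → le x y)
    (E₀ : Ideal R) (hE₀ : ∀ x : R, x ∈ E₀ ↔ (le x 0 ∧ le 0 x)) :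
    ∃ le' : (R ⧸ E₀) → (R ⧸ E₀) → Prop,
      -- well-definedness: `x̄ ⪯' ȳ ⇔ x ⪯ y`
      (∀ x y : R, le' (Ideal.Quotient.mk E₀ x) (Ideal.Quotient.mk E₀ y) ↔ le x y) ∧
      -- reflexive, transitive, total
      (∀ a : R ⧸ E₀, le' a a) ∧
      (∀ a b c : R ⧸ E₀, le' a b → le' b c → le' a c) ∧
      (∀ a b : R ⧸ E₀, le' a b ∨ le' b a) ∧
      -- (QR1)
      (le' 0 1 ∧ ¬ le' 1 0) ∧
      -- (QR2)
      (∀ a b : R ⧸ E₀, le' (a * b) 0 → le' a 0 ∨ le' b 0) ∧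
      -- (QR3)
      (∀ a b c : R ⧸ E₀, le' a b → le' 0 c → le' (a * c) (b * c)) ∧
      -- (QR4)
      (∀ a b c : R ⧸ E₀, le' a b → ¬ (le' c b ∧ le' b c) → le' (a + c) (b + c)) ∧
      -- (QR5)
      (∀ a b c : R ⧸ E₀, le' 0 c → ¬ le' c 0 → le' (a * c) (b * c) → le' a b) ∧
      -- support is trivial: `x̄ ∼ 0 ⇔ x̄ = 0`
      (∀ a : R ⧸ E₀, (le' a 0 ∧ le' 0 a) ↔ a = 0) := by
  
  -- key lemma: x - y ∈ E₀ → x ∼ y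
  have hsim : ∀ x y : R, x - y ∈ E₀ → le x y ∧ le y x := by
    intro x y h
    have hd := (hE₀ _).1 h
    by_cases hy : le y 0 ∧ le 0 y
    · have hx : le x 0 ∧ le 0 x := by
        have hx' : x ∈ E₀ := by
          have := E₀.add_mem h ((hE₀ y).2 hy)
          simpa using this
        exact (hE₀ x).1 hx'
      exact ⟨htrans _ _ _ hx.1 hy.2, htrans _ _ _ hy.1 hx.2⟩
    · have a1 := hQR4 (x - y) 0 y hd.1 hy
      have hy' : ¬ (le y (x - y) ∧ le (x - y) y) := by
        rintro ⟨h1, h2⟩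
        exact hy ⟨htrans _ _ _ h1 hd.1, htrans _ _ _ hd.2 h2⟩
      have a2 := hQR4 0 (x - y) y hd.2 hy'
      constructor
      · simpa using a1
      · simpa using a2
  set mk := Ideal.Quotient.mk E₀ with hmk
  have hsurj := Ideal.Quotient.mk_surjective (I := E₀)
  refine ⟨fun a b => ∃ x y, mk x = a ∧ mk y = b ∧ le x y, ?_, ?_⟩
  · -- well-definedness
    intro x y
    constructor
    · rintro ⟨x', y', hx, hy, hl⟩
      have hx' := hsim x x' ((Ideal.Quotient.eq).1 hx.symm)
      have hy' := hsim y' y ((Ideal.Quotient.eq).1 hy)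
      exact htrans _ _ _ hx'.1 (htrans _ _ _ hl hy'.1)
    · intro h
      exact ⟨x, y, rfl, rfl, h⟩
  have hwd : ∀ x y : R, (∃ x' y', mk x' = mk x ∧ mk y' = mk y ∧ le x' y') ↔ le x y := by
    intro x y
    constructor
    · rintro ⟨x', y', hx, hy, hl⟩
      have hx' := hsim x x' ((Ideal.Quotient.eq).1 hx.symm)
      have hy' := hsim y' y ((Ideal.Quotient.eq).1 hy)
      exact htrans _ _ _ hx'.1 (htrans _ _ _ hl hy'.1)
    · intro h
      exact ⟨x, y, rfl, rfl, h⟩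
  refine ⟨?_, ?_, ?_, ?_, ?_, ?_, ?_, ?_, ?_⟩
  · rintro a
    obtain ⟨x, rfl⟩ := hsurj a
    exact ⟨x, x, rfl, rfl, hrefl x⟩
  · rintro a b c ⟨x, y, rfl, rfl, h1⟩ hbc
    obtain ⟨c, rfl⟩ := hsurj c
    have h2 := (hwd y c).1 (by
      obtain ⟨y', c', hy', hc', h2⟩ := hbc
      exact ⟨y', c', hy', hc', h2⟩)
    exact ⟨x, c, rfl, rfl, htrans _ _ _ h1 h2⟩
  · intro a b
    obtain ⟨x, rfl⟩ := hsurj a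
    obtain ⟨y, rfl⟩ := hsurj b
    rcases htotal x y with h | h
    · exact Or.inl ⟨x, y, rfl, rfl, h⟩
    · exact Or.inr ⟨y, x, rfl, rfl, h⟩
  · constructor
    · exact ⟨0, 1, map_zero mk, map_one mk, hQR1.1⟩
    · rintro h
      have : le (1:R) 0 := (hwd 1 0).1 (by
        obtain ⟨x', y', hx, hy, hl⟩ := h
        exact ⟨x', y', by simpa [map_one] using hx, by simpa [map_zero] using hy, hl⟩)
      exact hQR1.2 this
  · intro a b h
    obtain ⟨x, rfl⟩ := hsurj a
    obtain ⟨y, rfl⟩ := hsurj b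
    have h' : le (x * y) 0 := (hwd (x*y) 0).1 (by
      obtain ⟨u, v, hu, hv, hl⟩ := h
      exact ⟨u, v, by simpa [map_mul] using hu, by simpa [map_zero] using hv, hl⟩)
    rcases hQR2 x y h' with h | h
    · exact Or.inl ⟨x, 0, rfl, map_zero mk, h⟩
    · exact Or.inr ⟨y, 0, rfl, map_zero mk, h⟩
  · rintro a b c ⟨x, y, rfl, rfl, h1⟩ h2
    obtain ⟨z, rfl⟩ := hsurj c
    have h2' : le 0 z := (hwd 0 z).1 (by
      obtain ⟨u, v, hu, hv, hl⟩ := h2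
      exact ⟨u, v, by simpa [map_zero] using hu, hv, hl⟩)
    exact ⟨x * z, y * z, map_mul mk x z, map_mul mk y z, hQR3 x y z h1 h2'⟩
  · rintro a b c ⟨x, y, rfl, rfl, h1⟩ h2
    obtain ⟨z, rfl⟩ := hsurj c
    have h2' : ¬ (le z y ∧ le y z) := by
      rintro ⟨ha, hb⟩
      exact h2 ⟨⟨z, y, rfl, rfl, ha⟩, ⟨y, z, rfl, rfl, hb⟩⟩
    exact ⟨x + z, y + z, map_add mk x z, map_add mk y z, hQR4 x y z h1 h2'⟩
  · intro a b c h1 h2 h3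
    obtain ⟨x, rfl⟩ := hsurj a
    obtain ⟨y, rfl⟩ := hsurj b
    obtain ⟨z, rfl⟩ := hsurj c
    have h1' : le 0 z := (hwd 0 z).1 (by
      obtain ⟨u, v, hu, hv, hl⟩ := h1
      exact ⟨u, v, by simpa [map_zero] using hu, hv, hl⟩)
    have h2' : ¬ le z 0 := by
      intro h
      exact h2 ⟨z, 0, rfl, map_zero mk, h⟩
    have h3' : le (x * z) (y * z) := (hwd (x*z) (y*z)).1 (by
      obtain ⟨u, v, hu, hv, hl⟩ := h3
      exact ⟨u, v, by simpa [map_mul] using hu, by simpa [map_mul] using hv, hl⟩)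
    exact ⟨x, y, rfl, rfl, hQR5 x y z h1' h2' h3'⟩
  · intro a
    obtain ⟨x, rfl⟩ := hsurj a
    constructor
    · rintro ⟨h1, h2⟩
      have h1' : le x 0 := (hwd x 0).1 (by
        obtain ⟨u, v, hu, hv, hl⟩ := h1
        exact ⟨u, v, hu, by simpa [map_zero] using hv, hl⟩)
      have h2' : le 0 x := (hwd 0 x).1 (by
        obtain ⟨u, v, hu, hv, hl⟩ := h2
        exact ⟨u, v, by simpa [map_zero] using hu, hv, hl⟩)
      have : x ∈ E₀ := (hE₀ x).2 ⟨h1', h2'⟩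
      exact (Ideal.Quotient.eq_zero_iff_mem).2 this
    · intro h
      have hx : x ∈ E₀ := (Ideal.Quotient.eq_zero_iff_mem).1 h
      have := (hE₀ x).1 hx
      exact ⟨⟨x, 0, rfl, map_zero mk, this.1⟩, ⟨0, x, map_zero mk, rfl, this.2⟩⟩
end

section
/- In a quasi-ordered ring (R, ⪯), every square is non-negative: 0 ⪯ x² for all x ∈ R. -/
/-- In a quasi-ordered ring, all squares are non-negative: `0 ⪯ x²`. -/
theorem quasiOrdered_sq_nonneg
    {R : Type} [CommRing R] (le : R → R → Prop)
    (hrefl : ∀ x : R, le x x)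
    (htrans : ∀ x y z : R, le x y → le y z → le x z)
    (htotal : ∀ x y : R, le x y ∨ le y x)
    (hQR1 : le 0 1 ∧ ¬ le 1 0)
    (hQR2 : ∀ x y : R, le (x * y) 0 → le x 0 ∨ le y 0)
    (hQR3 : ∀ x y z : R, le x y → le 0 z → le (x * z) (y * z))
    (hQR4 : ∀ x y z : R, le x y → ¬ (le z y ∧ le y z) → le (x + z) (y + z))
    (hQR5 : ∀ x y z : R, le 0 z → ¬ le z 0 → le (x * z) (y * z) → le x y) :
    ∀ x : R, le 0 (x ^ 2) := by
  intro x
  rcases htotal 0 x with hx | hx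
  · have h := hQR3 0 x x hx hx
    have e1 : (0 : R) * x = 0 := by ring
    have e2 : x * x = x ^ 2 := by ring
    rwa [e1, e2] at h
  · have hnx : le 0 (-x) := by
      by_cases h : le 0 (-x)
      · exact h
      · exfalso
        have h4 := hQR4 x 0 (-x) hx (fun hc => h hc.2)
        have e : x + -x = (0 : R) := by ring
        rw [e] at h4
        have e2 : (0 : R) + -x = -x := by ring
        rw [e2] at h4
        exact h h4
    have h := hQR3 0 (-x) (-x) hnx hnx
    have e1 : (0 : R) * (-x) = 0 := by ring
    have e2 : (-x) * (-x) = x ^ 2 := by ring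
    rwa [e1, e2] at h
end

section
/- Let (R, ⪯) be a quasi-ordered ring whose support E₀ equals {0} (so R is an integral domain), and let K = Quot(R). Then the relation ⊴ on K defined by a/b ⊴ x/y :⇔ a·b·y² ⪯ x·y·b² is well-defined, extends ⪯ from R to K, and makes (K, ⊴) a quasi-ordered field. -/
/-- A quasi-order on an integral domain `R` with support `{0}` extends, via
`a/b ⊴ x/y :⇔ a·b·y² ⪯ x·y·b²`, to a well-defined quasi-order on the fraction
field `K = Quot(R)`, making `(K, ⊴)` a quasi-ordered field. -/
theorem quasiOrdered_extends_to_fractionField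
    {R : Type} [CommRing R] [IsDomain R] (le : R → R → Prop)
    (hrefl : ∀ x : R, le x x)
    (htrans : ∀ x y z : R, le x y → le y z → le x z)
    (htotal : ∀ x y : R, le x y ∨ le y x)
    (hQR1 : le 0 1 ∧ ¬ le 1 0)
    (hQR2 : ∀ x y : R, le (x * y) 0 → le x 0 ∨ le y 0)
    (hQR3 : ∀ x y z : R, le x y → le 0 z → le (x * z) (y * z))
    (hQR4 : ∀ x y z : R, le x y → ¬ (le z y ∧ le y z) → le (x + z) (y + z))
    (hQR5 : ∀ x y z : R, le 0 z → ¬ le z 0 → le (x * z) (y * z) → le x y)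
    (hsupp : ∀ x : R, le x 0 → le 0 x → x = 0) :
    ∃ tle : FractionRing R → FractionRing R → Prop,
      -- well-definedness and the defining formula on arbitrary representatives
      (∀ a b x y : R, b ≠ 0 → y ≠ 0 →
        (tle (algebraMap R (FractionRing R) a / algebraMap R (FractionRing R) b)
             (algebraMap R (FractionRing R) x / algebraMap R (FractionRing R) y) ↔
          le (a * b * y ^ 2) (x * y * b ^ 2))) ∧
      -- `⊴` extends `⪯`
      (∀ a x : R,
        tle (algebraMap R (FractionRing R) a) (algebraMap R (FractionRing R) x) ↔
          le a x) ∧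
      -- reflexive, transitive, total
      (∀ p : FractionRing R, tle p p) ∧
      (∀ p q r : FractionRing R, tle p q → tle q r → tle p r) ∧
      (∀ p q : FractionRing R, tle p q ∨ tle q p) ∧
      -- (Q1)
      (∀ p : FractionRing R, (tle p 0 ∧ tle 0 p) → p = 0) ∧
      -- (Q2)
      (∀ p q r : FractionRing R, tle p q → tle 0 r → tle (p * r) (q * r)) ∧
      -- (Q3)
      (∀ p q r : FractionRing R, tle p q → ¬ (tle r q ∧ tle q r) →
        tle (p + r) (q + r)) := by
  classical
  set f : R →+* FractionRing R := (algebraMap R (FractionRing R)) with hfdef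
  have finj : Function.Injective f := IsFractionRing.injective R (FractionRing R)
  have fne : ∀ b : R, b ≠ 0 → f b ≠ 0 := by
    intro b hb h0
    exact hb (finj (by rw [h0, map_zero]))
  -- congruence helper
  have hcong : ∀ u v u' v' : R, u = u' → v = v' → le u v → le u' v' := by
    rintro u v u' v' rfl rfl h; exact h
  -- squares are nonnegative
  have hsq : ∀ x : R, le 0 (x * x) := by
    intro x
    rcases htotal 0 x with h | h
    · exact hcong _ _ _ _ (zero_mul x) rfl (hQR3 0 x x h h)
    · by_cases hx : x = 0
      · subst hx; exact hcong _ _ _ _ rfl (by ring) (hrefl 0)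
      · have hnx : ¬ (le (-x) 0 ∧ le 0 (-x)) := by
          rintro ⟨h1, h2⟩
          exact hx (neg_eq_zero.mp (hsupp _ h1 h2))
        have h4 : le 0 (-x) :=
          hcong _ _ _ _ (by ring) (by ring) (hQR4 x 0 (-x) h hnx)
        exact hcong _ _ _ _ (zero_mul _) (by ring) (hQR3 0 (-x) (-x) h4 h4)
  have hsqpos : ∀ b : R, b ≠ 0 → ¬ le (b * b) 0 := by
    intro b hb h
    exact hb (mul_self_eq_zero.mp (hsupp _ h (hsq b)))
  -- multiplication by a nonzero square is an order-equivalence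
  have hmul : ∀ u v c : R, c ≠ 0 → (le u v ↔ le (u * (c * c)) (v * (c * c))) := by
    intro u v c hc
    exact ⟨fun h => hQR3 u v (c * c) h (hsq c),
      fun h => hQR5 u v (c * c) (hsq c) (hsqpos c hc) h⟩
  -- representation of elements of the fraction field
  have hrep : ∀ p : FractionRing R, ∃ a b : R, b ≠ 0 ∧ p = f a / f b := by
    intro p
    obtain ⟨a, b, hb, h⟩ := IsFractionRing.div_surjective (A := R) p
    exact ⟨a, b, nonZeroDivisors.ne_zero hb, h.symm⟩
  -- independence of the defining condition of the chosen representatives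
  have hind : ∀ a b x y a' b' x' y' : R, b ≠ 0 → y ≠ 0 → b' ≠ 0 → y' ≠ 0 →
      f a / f b = f a' / f b' → f x / f y = f x' / f y' →
      le (a * b * y ^ 2) (x * y * b ^ 2) → le (a' * b' * y' ^ 2) (x' * y' * b' ^ 2) := by
    intro a b x y a' b' x' y' hb hy hb' hy' hp hq h
    have hab : a * b' = a' * b := by
      apply finj
      rw [map_mul, map_mul]
      exact (div_eq_div_iff (fne b hb) (fne b' hb')).mp hp
    have hxy : x * y' = x' * y := by
      apply finj
      rw [map_mul, map_mul]
      exact (div_eq_div_iff (fne y hy) (fne y' hy')).mp hq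
    have s1 : le (a * b * y ^ 2 * (b' * b')) (x * y * b ^ 2 * (b' * b')) :=
      (hmul _ _ b' hb').mp h
    have s1' : le (a' * b' * y ^ 2 * (b * b)) (x * y * b' ^ 2 * (b * b)) :=
      hcong _ _ _ _ (by linear_combination (y ^ 2 * b * b') * hab) (by ring) s1
    have s2 : le (a' * b' * y ^ 2) (x * y * b' ^ 2) := (hmul _ _ b hb).mpr s1'
    have s3 : le (a' * b' * y ^ 2 * (y' * y')) (x * y * b' ^ 2 * (y' * y')) :=
      (hmul _ _ y' hy').mp s2
    have s3' : le (a' * b' * y' ^ 2 * (y * y)) (x' * y' * b' ^ 2 * (y * y)) :=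
      hcong _ _ _ _ (by ring) (by linear_combination (y * y' * b' ^ 2) * hxy) s3
    exact (hmul _ _ y hy).mpr s3'
  -- the candidate relation
  set Tle : FractionRing R → FractionRing R → Prop := fun p q =>
    ∃ a b x y : R, b ≠ 0 ∧ y ≠ 0 ∧ p = f a / f b ∧ q = f x / f y ∧
      le (a * b * y ^ 2) (x * y * b ^ 2) with hTle
  -- the defining formula
  have hform : ∀ a b x y : R, b ≠ 0 → y ≠ 0 →
      (Tle (f a / f b) (f x / f y) ↔ le (a * b * y ^ 2) (x * y * b ^ 2)) := by
    intro a b x y hb hy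
    constructor
    · rintro ⟨a', b', x', y', hb', hy', hp, hq, h⟩
      exact hind a' b' x' y' a b x y hb' hy' hb hy hp.symm hq.symm h
    · intro h
      exact ⟨a, b, x, y, hb, hy, rfl, rfl, h⟩
  have hzero : (0 : FractionRing R) = f 0 / f 1 := by simp
  refine ⟨Tle, hform, ?_, ?_, ?_, ?_, ?_, ?_, ?_⟩
  · -- extends
    intro a x
    have := hform a 1 x 1 one_ne_zero one_ne_zero
    simpa using this
  · -- refl
    intro p
    obtain ⟨a, b, hb, rfl⟩ := hrep p
    exact (hform a b a b hb hb).mpr (hrefl _)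
  · -- trans
    intro p q r hpq hqr
    obtain ⟨a, b, hb, rfl⟩ := hrep p
    obtain ⟨x, y, hy, rfl⟩ := hrep q
    obtain ⟨u, v, hv, rfl⟩ := hrep r
    have h1 := (hform a b x y hb hy).mp hpq
    have h2 := (hform x y u v hy hv).mp hqr
    apply (hform a b u v hb hv).mpr
    apply (hmul _ _ y hy).mpr
    have h1' : le (a * b * y ^ 2 * (v * v)) (x * y * b ^ 2 * (v * v)) :=
      (hmul _ _ v hv).mp h1
    have h2' : le (x * y * v ^ 2 * (b * b)) (u * v * y ^ 2 * (b * b)) :=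
      (hmul _ _ b hb).mp h2
    have h2'' : le (x * y * b ^ 2 * (v * v)) (u * v * b ^ 2 * (y * y)) :=
      hcong _ _ _ _ (by ring) (by ring) h2'
    exact hcong _ _ _ _ (by ring) rfl (htrans _ _ _ h1' h2'')
  · -- total
    intro p q
    obtain ⟨a, b, hb, rfl⟩ := hrep p
    obtain ⟨x, y, hy, rfl⟩ := hrep q
    rcases htotal (a * b * y ^ 2) (x * y * b ^ 2) with h | h
    · exact Or.inl ((hform a b x y hb hy).mpr h)
    · exact Or.inr ((hform x y a b hy hb).mpr h)
  · -- Q1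
    rintro p ⟨h1, h2⟩
    obtain ⟨a, b, hb, rfl⟩ := hrep p
    rw [hzero] at h1 h2
    have h1' := (hform a b 0 1 hb one_ne_zero).mp h1
    have h2' := (hform 0 1 a b one_ne_zero hb).mp h2
    have hab : a * b = 0 :=
      hsupp _ (hcong _ _ _ _ (by ring) (by ring) h1')
        (hcong _ _ _ _ (by ring) (by ring) h2')
    have ha : a = 0 := by
      rcases mul_eq_zero.mp hab with h | h
      · exact h
      · exact absurd h hb
    rw [ha, map_zero, zero_div]
  · -- Q2
    intro p q r hpq h0r
    obtain ⟨a, b, hb, rfl⟩ := hrep p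
    obtain ⟨x, y, hy, rfl⟩ := hrep q
    obtain ⟨u, v, hv, rfl⟩ := hrep r
    rw [hzero] at h0r
    have h1 := (hform a b x y hb hy).mp hpq
    have h2 := (hform 0 1 u v one_ne_zero hv).mp h0r
    have h2' : le 0 (u * v) := hcong _ _ _ _ (by ring) (by ring) h2
    refine ⟨a * u, b * v, x * u, y * v, mul_ne_zero hb hv, mul_ne_zero hy hv,
      ?_, ?_, ?_⟩
    · rw [map_mul, map_mul]; ring
    · rw [map_mul, map_mul]; ring
    · have s1 : le (a * b * y ^ 2 * (u * v)) (x * y * b ^ 2 * (u * v)) :=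
        hQR3 _ _ _ h1 h2'
      have s2 : le (a * b * y ^ 2 * (u * v) * (v * v))
          (x * y * b ^ 2 * (u * v) * (v * v)) :=
        hQR3 _ _ _ s1 (hsq v)
      exact hcong _ _ _ _ (by ring) (by ring) s2
  · -- Q3
    intro p q r hpq hne
    obtain ⟨a, b, hb, rfl⟩ := hrep p
    obtain ⟨x, y, hy, rfl⟩ := hrep q
    obtain ⟨u, v, hv, rfl⟩ := hrep r
    have h1 := (hform a b x y hb hy).mp hpq
    have hbv : b * v ≠ 0 := mul_ne_zero hb hv
    have hyv : y * v ≠ 0 := mul_ne_zero hy hv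
    have hne' : ¬ (le (u * v * y ^ 2) (x * y * v ^ 2) ∧
        le (x * y * v ^ 2) (u * v * y ^ 2)) := by
      rintro ⟨hc1, hc2⟩
      exact hne ⟨(hform u v x y hv hy).mpr hc1, (hform x y u v hy hv).mpr hc2⟩
    refine ⟨a * v + u * b, b * v, x * v + u * y, y * v, hbv, hyv, ?_, ?_, ?_⟩
    · rw [div_add_div _ _ (fne b hb) (fne v hv), map_add, map_mul, map_mul, map_mul]
      ring_nf
    · rw [div_add_div _ _ (fne y hy) (fne v hv), map_add, map_mul, map_mul, map_mul]
      ring_nf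
    · have s1 : le (a * b * y ^ 2 * ((v * v) * (v * v)))
          (x * y * b ^ 2 * ((v * v) * (v * v))) :=
        (hmul _ _ (v * v) (mul_ne_zero hv hv)).mp h1
      have s1' : le (a * b * y ^ 2 * ((v * v) * (v * v)))
          (x * y * v ^ 2 * ((b * v) * (b * v))) :=
        hcong _ _ _ _ rfl (by ring) s1
      have hzY : ¬ (le (u * v * y ^ 2 * ((b * v) * (b * v)))
            (x * y * v ^ 2 * ((b * v) * (b * v))) ∧
          le (x * y * v ^ 2 * ((b * v) * (b * v)))
            (u * v * y ^ 2 * ((b * v) * (b * v)))) := by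
        rintro ⟨hc1, hc2⟩
        exact hne' ⟨(hmul _ _ (b * v) hbv).mpr hc1, (hmul _ _ (b * v) hbv).mpr hc2⟩
      have s2 := hQR4 _ _ (u * v * y ^ 2 * ((b * v) * (b * v))) s1' hzY
      exact hcong _ _ _ _ (by ring) (by ring) s2
end

section
/- Let (R, ⪯) be a quasi-ordered ring with support E₀ and suppose the induced relation ⪯' on R/E₀ (defined by x̄ ⪯' ȳ :⇔ x ⪯ y) is an order on R/E₀ with support {0}. Then ⪯ itself is an order on R (satisfying (O1)–(O4)) with support E₀. -/
/-- If the relation induced by a quasi-order `⪯` on `R/E₀` is an order with support `{0}`,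
then `⪯` itself is an order on `R` (satisfies (O1)–(O4)) with support `E₀`. -/
theorem quasiOrder_is_order_of_quotient_order
    {R : Type} [CommRing R] (le : R → R → Prop)
    (hrefl : ∀ x : R, le x x)
    (htrans : ∀ x y z : R, le x y → le y z → le x z)
    (htotal : ∀ x y : R, le x y ∨ le y x)
    (hQR1 : le 0 1 ∧ ¬ le 1 0)
    (hQR2 : ∀ x y : R, le (x * y) 0 → le x 0 ∨ le y 0)
    (hQR3 : ∀ x y z : R, le x y → le 0 z → le (x * z) (y * z))
    (hQR4 : ∀ x y z : R, le x y → ¬ (le z y ∧ le y z) → le (x + z) (y + z))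
    (hQR5 : ∀ x y z : R, le 0 z → ¬ le z 0 → le (x * z) (y * z) → le x y)
    (E₀ : Ideal R) (hE₀ : ∀ x : R, x ∈ E₀ ↔ (le x 0 ∧ le 0 x))
    (le' : (R ⧸ E₀) → (R ⧸ E₀) → Prop)
    (hle' : ∀ x y : R, le' (Ideal.Quotient.mk E₀ x) (Ideal.Quotient.mk E₀ y) ↔ le x y)
    -- `le'` is an order on `R/E₀`:
    (hrefl' : ∀ a : R ⧸ E₀, le' a a)
    (htrans' : ∀ a b c : R ⧸ E₀, le' a b → le' b c → le' a c)
    (htotal' : ∀ a b : R ⧸ E₀, le' a b ∨ le' b a)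
    (hO1' : le' 0 1 ∧ ¬ le' 1 0)
    (hO2' : ∀ a b : R ⧸ E₀, le' (a * b) 0 → le' a 0 ∨ le' b 0)
    (hO3' : ∀ a b c : R ⧸ E₀, le' a b → le' 0 c → le' (a * c) (b * c))
    (hO4' : ∀ a b c : R ⧸ E₀, le' a b → le' (a + c) (b + c))
    -- with support `{0}`:
    (hsupp' : ∀ a : R ⧸ E₀, (le' a 0 ∧ le' 0 a) → a = 0) :
    -- then `le` is an order on `R`:
    (le 0 1 ∧ ¬ le 1 0) ∧
    (∀ x y : R, le (x * y) 0 → le x 0 ∨ le y 0) ∧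
    (∀ x y z : R, le x y → le 0 z → le (x * z) (y * z)) ∧
    (∀ x y z : R, le x y → le (x + z) (y + z)) ∧
    -- with support `E₀`:
    (∀ x : R, (le x 0 ∧ le 0 x) ↔ x ∈ E₀) := by
  refine ⟨hQR1, hQR2, hQR3, ?_, fun x => (hE₀ x).symm⟩
  intro x y z hxy
  have h := hO4' (Ideal.Quotient.mk E₀ x) (Ideal.Quotient.mk E₀ y) (Ideal.Quotient.mk E₀ z)
    ((hle' x y).mpr hxy)
  rw [← map_add, ← map_add, hle'] at h
  exact h
end

section
/- Dichotomy theorem: Every quasi-ordered ring (R, ⪯) is either an ordered ring (⪯ satisfies (O1)–(O4)), or else there exists a valuation v on R such that x ⪯ y ⇔ v(y) ≤ v(x) for all x, y ∈ R. Moreover, the support E₀ of ⪯ coincides with the support of this order, respectively of this valuation. -/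
/-!
If `-1 ⪯ 0`, then `-a ≺ 0` whenever `0 ≺ a`, the nonnegative elements are closed under addition,
and `x ⪯ y ↔ 0 ⪯ y - x`; this makes `⪯` translation invariant, i.e. an order.
If `0 ≺ -1`, then `1 ∼ -1`, so every `x` satisfies `0 ⪯ x` and `x ∼ -x`. Using `x ∼ -x` to dodge
the exceptional case of (QR4) one gets the ultrametric inequality `x, y ⪯ z ⇒ x + y ⪯ z`, so `⪯` is
a valuative relation (`ValuativeRel`). Its multiplicative valuation, written additively with the
order reversed, is the required `v`; its support `{x | x ⪯ 0}` is `E₀` because `0 ⪯ x` for all `x`.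
-/

structure RingValuation (R : Type) [CommRing R] where
  Γ : Type
  [grp : AddCommGroup Γ]
  [ord : LinearOrder Γ]
  [isOrd : IsOrderedAddMonoid Γ]
  v : R → WithTop Γ
  map_zero : v 0 = ⊤
  map_one : v 1 = 0
  map_mul : ∀ x y : R, v (x * y) = v x + v y
  map_add : ∀ x y : R, min (v x) (v y) ≤ v (x + y)

attribute [instance] RingValuation.grp
attribute [instance] RingValuation.ord
attribute [instance] RingValuation.isOrd

namespace LinearOrderedCommGroupWithZero

variable {Γ₀ : Type} [LinearOrderedCommGroupWithZero Γ₀]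

noncomputable def toWithTopAdditive (a : Γ₀) : WithTop (Additive Γ₀ˣᵒᵈ) :=
  if h : a = 0 then ⊤ else WithTop.some (Additive.ofMul (OrderDual.toDual (Units.mk0 a h)))

@[simp] lemma toWithTopAdditive_zero : toWithTopAdditive (0 : Γ₀) = ⊤ := dif_pos rfl

lemma toWithTopAdditive_of_ne_zero {a : Γ₀} (h : a ≠ 0) :
    toWithTopAdditive a = WithTop.some (Additive.ofMul (OrderDual.toDual (Units.mk0 a h))) :=
  dif_neg h

@[simp] lemma toWithTopAdditive_eq_top_iff {a : Γ₀} : toWithTopAdditive a = ⊤ ↔ a = 0 := by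
  by_cases h : a = 0
  · simp [h]
  · simp [h, toWithTopAdditive_of_ne_zero h]

lemma toWithTopAdditive_one : toWithTopAdditive (1 : Γ₀) = 0 := by
  rw [toWithTopAdditive_of_ne_zero one_ne_zero, Units.mk0_one]
  rfl

lemma toWithTopAdditive_mul (a b : Γ₀) :
    toWithTopAdditive (a * b) = toWithTopAdditive a + toWithTopAdditive b := by
  by_cases ha : a = 0
  · simp [ha]
  by_cases hb : b = 0
  · simp [hb]
  rw [toWithTopAdditive_of_ne_zero ha, toWithTopAdditive_of_ne_zero hb,
    toWithTopAdditive_of_ne_zero (mul_ne_zero ha hb), ← WithTop.coe_add, Units.mk0_mul]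
  rfl

lemma toWithTopAdditive_le_iff {a b : Γ₀} :
    toWithTopAdditive a ≤ toWithTopAdditive b ↔ b ≤ a := by
  by_cases hb : b = 0
  · simp [hb]
  by_cases ha : a = 0
  · simp [ha, hb, toWithTopAdditive_of_ne_zero hb]
  rw [toWithTopAdditive_of_ne_zero ha, toWithTopAdditive_of_ne_zero hb, WithTop.coe_le_coe]
  exact Units.val_le_val

end LinearOrderedCommGroupWithZero

namespace Valuation

open LinearOrderedCommGroupWithZero

variable {R Γ₀ : Type} [CommRing R] [LinearOrderedCommGroupWithZero Γ₀]

noncomputable def toRingValuation (v : Valuation R Γ₀) : RingValuation R where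
  Γ := Additive Γ₀ˣᵒᵈ
  v x := toWithTopAdditive (v x)
  map_zero := by simp
  map_one := by simp [toWithTopAdditive_one]
  map_mul x y := by simp [toWithTopAdditive_mul]
  map_add x y := by
    rcases le_max_iff.mp (v.map_add x y) with h | h
    · exact min_le_of_left_le (toWithTopAdditive_le_iff.mpr h)
    · exact min_le_of_right_le (toWithTopAdditive_le_iff.mpr h)

lemma toRingValuation_le_iff (v : Valuation R Γ₀) {x y : R} :
    v.toRingValuation.v x ≤ v.toRingValuation.v y ↔ v y ≤ v x :=
  toWithTopAdditive_le_iff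

lemma toRingValuation_eq_top_iff (v : Valuation R Γ₀) {x : R} :
    v.toRingValuation.v x = ⊤ ↔ v x = 0 :=
  toWithTopAdditive_eq_top_iff

end Valuation

structure IsQuasiOrderedRing {R : Type} [CommRing R] (le : R → R → Prop) : Prop where
  refl : ∀ x, le x x
  trans : ∀ {x y z}, le x y → le y z → le x z
  total : ∀ x y, le x y ∨ le y x
  zero_lt_one : le 0 1 ∧ ¬ le 1 0
  nonpos_or_nonpos_of_mul_nonpos : ∀ x y, le (x * y) 0 → le x 0 ∨ le y 0
  mul_le_mul_of_nonneg_right : ∀ x y z, le x y → le 0 z → le (x * z) (y * z)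
  add_le_add_right : ∀ x y z, le x y → ¬ AntisymmRel le z y → le (x + z) (y + z)
  le_of_mul_le_mul_right : ∀ x y z, le 0 z → ¬ le z 0 → le (x * z) (y * z) → le x y

namespace IsQuasiOrderedRing

variable {R : Type} [CommRing R] {le : R → R → Prop} {x y z : R}

local infixl:50 " ⪯ " => le
local infix:50 " ∼ " => AntisymmRel le

lemma antisymmRel_trans (h : IsQuasiOrderedRing le) (hxy : x ∼ y) (hyz : y ∼ z) : x ∼ z :=
  ⟨h.trans hxy.1 hyz.1, h.trans hyz.2 hxy.2⟩

lemma neg_nonneg_of_nonpos (h : IsQuasiOrderedRing le) (hx : x ⪯ 0) : 0 ⪯ -x := by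
  by_cases hc : -x ∼ 0
  · exact hc.2
  · simpa using h.add_le_add_right x 0 (-x) hx hc

lemma neg_antisymmRel_zero (h : IsQuasiOrderedRing le) (hx : x ∼ 0) : -x ∼ 0 := by
  refine ⟨?_, h.neg_nonneg_of_nonpos hx.1⟩
  by_cases hc : -x ∼ x
  · exact h.trans hc.1 hx.1
  · simpa using h.add_le_add_right 0 x (-x) hx.2 hc

lemma add_antisymmRel_of_not_antisymmRel_zero (h : IsQuasiOrderedRing le) (hx : x ∼ 0)
    (hy : ¬ y ∼ 0) : x + y ∼ y := by
  refine ⟨by simpa using h.add_le_add_right x 0 y hx.1 hy, ?_⟩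
  have hyx : ¬ y ∼ x := fun hyx => hy (h.antisymmRel_trans hyx hx)
  simpa using h.add_le_add_right 0 x y hx.2 hyx

lemma add_antisymmRel_zero (h : IsQuasiOrderedRing le) (hx : x ∼ 0) (hy : y ∼ 0) :
    x + y ∼ 0 := by
  by_contra hxy
  have := h.add_antisymmRel_of_not_antisymmRel_zero (h.neg_antisymmRel_zero hx) hxy
  rw [neg_add_cancel_left] at this
  exact hxy (h.antisymmRel_trans this.symm hy)

lemma add_antisymmRel_self (h : IsQuasiOrderedRing le) (hx : x ∼ 0) (y : R) : x + y ∼ y := by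
  by_cases hy : y ∼ 0
  · exact h.antisymmRel_trans (h.add_antisymmRel_zero hx hy) hy.symm
  · exact h.add_antisymmRel_of_not_antisymmRel_zero hx hy

lemma neg_nonpos_of_nonneg (h : IsQuasiOrderedRing le) (hneg : -1 ⪯ 0) (hx : 0 ⪯ x) :
    -x ⪯ 0 := by
  simpa using h.mul_le_mul_of_nonneg_right (-1) 0 x hneg hx

lemma not_nonneg_neg (h : IsQuasiOrderedRing le) (hneg : -1 ⪯ 0) (hx : ¬ x ⪯ 0) :
    ¬ 0 ⪯ -x :=
  fun hx' => hx (by simpa using h.neg_nonpos_of_nonneg hneg hx')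

lemma add_nonneg (h : IsQuasiOrderedRing le) (hneg : -1 ⪯ 0) (hx : 0 ⪯ x) (hy : 0 ⪯ y) :
    0 ⪯ x + y := by
  by_cases hx0 : x ⪯ 0
  · exact h.trans hy (h.add_antisymmRel_self ⟨hx0, hx⟩ y).2
  rcases h.total 0 (x + y) with hxy | hxy
  · exact hxy
  have hc : ¬ -x ∼ 0 := fun hc => h.not_nonneg_neg hneg hx0 hc.2
  have hy' : y ⪯ -x := by simpa using h.add_le_add_right (x + y) 0 (-x) hxy hc
  exact absurd (h.trans hy hy') (h.not_nonneg_neg hneg hx0)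

lemma sub_nonneg_of_le (h : IsQuasiOrderedRing le) (hneg : -1 ⪯ 0) (hxy : x ⪯ y) :
    0 ⪯ y - x := by
  rw [sub_eq_add_neg]
  by_cases hc : -x ∼ y
  · have hx : 0 ⪯ -x := by
      rcases h.total 0 (-x) with hx | hx
      · exact hx
      · exact h.neg_nonneg_of_nonpos (h.trans hxy (h.trans hc.2 hx))
    exact h.add_nonneg hneg (h.trans hx hc.1) hx
  · simpa using h.add_le_add_right x y (-x) hxy hc

lemma le_of_sub_nonneg (h : IsQuasiOrderedRing le) (hneg : -1 ⪯ 0) (hxy : 0 ⪯ y - x) :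
    x ⪯ y := by
  by_contra hxy'
  have hyx := (h.total x y).resolve_left hxy'
  have hpos : ¬ x - y ⪯ 0 := fun hle =>
    hxy' (by simpa using (h.add_antisymmRel_self ⟨hle, h.sub_nonneg_of_le hneg hyx⟩ y).1)
  exact h.not_nonneg_neg hneg hpos (by rwa [neg_sub])

lemma add_le_add_right_of_neg_one_nonpos (h : IsQuasiOrderedRing le) (hneg : -1 ⪯ 0)
    (hxy : x ⪯ y) (z : R) : x + z ⪯ y + z :=
  h.le_of_sub_nonneg hneg (by simpa using h.sub_nonneg_of_le hneg hxy)

lemma one_antisymmRel_neg_one (h : IsQuasiOrderedRing le) (hneg : ¬ -1 ⪯ 0) : 1 ∼ -1 := by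
  have h0 : 0 ⪯ -1 := (h.total (-1) 0).resolve_left hneg
  rcases h.total 1 (-1) with h1 | h1
  · exact ⟨h1, by simpa using h.mul_le_mul_of_nonneg_right 1 (-1) (-1) h1 h0⟩
  · exact ⟨by simpa using h.mul_le_mul_of_nonneg_right (-1) 1 (-1) h1 h0, h1⟩

lemma nonneg (h : IsQuasiOrderedRing le) (hneg : ¬ -1 ⪯ 0) (x : R) : 0 ⪯ x := by
  rcases h.total 0 x with hx | hx
  · exact hx
  have hx' := h.neg_nonneg_of_nonpos hx
  exact h.trans hx' (by simpa using
    h.mul_le_mul_of_nonneg_right 1 (-1) (-x) (h.one_antisymmRel_neg_one hneg).1 hx')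

lemma antisymmRel_neg (h : IsQuasiOrderedRing le) (hneg : ¬ -1 ⪯ 0) (x : R) : x ∼ -x := by
  have h1 := h.one_antisymmRel_neg_one hneg
  constructor
  · simpa using h.mul_le_mul_of_nonneg_right 1 (-1) x h1.1 (h.nonneg hneg x)
  · simpa using h.mul_le_mul_of_nonneg_right (-1) 1 x h1.2 (h.nonneg hneg x)

lemma add_le_of_lt (h : IsQuasiOrderedRing le) (hneg : ¬ -1 ⪯ 0) (hxy : x ⪯ y)
    (hyx : ¬ y ⪯ x) : x + y ⪯ y := by
  by_contra hs
  have hc : ¬ -(x + y) ∼ y := fun hc => hs (h.trans (h.antisymmRel_neg hneg (x + y)).1 hc.1)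
  have hyx' : -y ⪯ -x := by simpa using h.add_le_add_right x y (-(x + y)) hxy hc
  exact hyx (h.trans (h.antisymmRel_neg hneg y).1 (h.trans hyx' (h.antisymmRel_neg hneg x).2))

lemma le_add_of_lt (h : IsQuasiOrderedRing le) (hneg : ¬ -1 ⪯ 0) (hxy : x ⪯ y)
    (hyx : ¬ y ⪯ x) : y ⪯ x + y := by
  have hnx := h.antisymmRel_neg hneg x
  have hle : -x + y ⪯ y :=
    h.add_le_of_lt hneg (h.trans hnx.2 hxy) fun hy => hyx (h.trans hy hnx.2)
  have hc : ¬ x ∼ y := fun hc => hyx hc.2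
  simpa [add_comm y x] using h.add_le_add_right (-x + y) y x hle hc

lemma add_le_of_le (h : IsQuasiOrderedRing le) (hneg : ¬ -1 ⪯ 0) (hxy : x ⪯ y) :
    x + y ⪯ y := by
  by_contra hs
  have hny := h.antisymmRel_neg hneg y
  have hys : y ⪯ x + y := (h.total (x + y) y).resolve_left hs
  have hsx : x + y ⪯ x := by
    simpa using h.le_add_of_lt hneg (h.trans hny.2 hys) fun hsy => hs (h.trans hsy hny.2)
  exact hs (h.trans hsx hxy)

lemma add_le (h : IsQuasiOrderedRing le) (hneg : ¬ -1 ⪯ 0) (hx : x ⪯ z) (hy : y ⪯ z) :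
    x + y ⪯ z := by
  rcases h.total x y with hxy | hyx
  · exact h.trans (h.add_le_of_le hneg hxy) hy
  · exact h.trans (add_comm x y ▸ h.add_le_of_le hneg hyx) hx

abbrev toValuativeRel (h : IsQuasiOrderedRing le) (hneg : ¬ -1 ⪯ 0) : ValuativeRel R where
  vle := le
  vle_total := h.total
  vle_trans := h.trans
  vle_add := h.add_le hneg
  mul_vle_mul_left hxy z := h.mul_le_mul_of_nonneg_right _ _ z hxy (h.nonneg hneg z)
  vle_mul_cancel := h.le_of_mul_le_mul_right _ _ _ (h.nonneg hneg _)
  not_vle_one_zero := h.zero_lt_one.2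
  vle_mul_comm {x y} := mul_comm y x ▸ h.refl (x * y)

end IsQuasiOrderedRing

/-- Dichotomy: a quasi-ordered ring is either an ordered ring (with the same support),
or else there is a valuation `v` on `R` with `x ⪯ y ⇔ v(y) ≤ v(x)` whose support is
the support of the quasi-order. -/
theorem quasiOrderedRing_dichotomy
    {R : Type} [CommRing R] (le : R → R → Prop)
    (hrefl : ∀ x : R, le x x)
    (htrans : ∀ x y z : R, le x y → le y z → le x z)
    (htotal : ∀ x y : R, le x y ∨ le y x)
    (hQR1 : le 0 1 ∧ ¬ le 1 0)
    (hQR2 : ∀ x y : R, le (x * y) 0 → le x 0 ∨ le y 0)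
    (hQR3 : ∀ x y z : R, le x y → le 0 z → le (x * z) (y * z))
    (hQR4 : ∀ x y z : R, le x y → ¬ (le z y ∧ le y z) → le (x + z) (y + z))
    (hQR5 : ∀ x y z : R, le 0 z → ¬ le z 0 → le (x * z) (y * z) → le x y) :
    -- either `le` is an order on `R` (its support is then the support `E₀` of `⪯`)
    ((le 0 1 ∧ ¬ le 1 0) ∧
     (∀ x y : R, le (x * y) 0 → le x 0 ∨ le y 0) ∧
     (∀ x y z : R, le x y → le 0 z → le (x * z) (y * z)) ∧
     (∀ x y z : R, le x y → le (x + z) (y + z)))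
    ∨
    -- or `le` is induced by a valuation on `R` whose support is `E₀`
    (∃ V : RingValuation R,
      (∀ x y : R, le x y ↔ V.v y ≤ V.v x) ∧
      (∀ x : R, V.v x = ⊤ ↔ (le x 0 ∧ le 0 x))) := by
  have h : IsQuasiOrderedRing le := ⟨hrefl, htrans _ _ _, htotal, hQR1, hQR2, hQR3, hQR4, hQR5⟩
  by_cases hneg : le (-1) 0
  · exact .inl ⟨hQR1, hQR2, hQR3, fun x y z hxy => h.add_le_add_right_of_neg_one_nonpos hneg hxy z⟩
  · let := h.toValuativeRel hneg
    refine .inr ⟨(ValuativeRel.valuation R).toRingValuation, fun x y => ?_, fun x => ?_⟩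
    · rw [Valuation.toRingValuation_le_iff]
      exact Valuation.Compatible.vle_iff_le x y
    · rw [Valuation.toRingValuation_eq_top_iff, ValuativeRel.valuation_eq_zero_iff]
      exact ⟨fun hx => ⟨hx, h.nonneg hneg x⟩, And.left⟩
end

section
/- There exists a binary, reflexive, transitive, total relation ⪯ on ℝ[X,Y] satisfying axioms (O1), (O2), (O3) and (Q3), which is neither an order on ℝ[X,Y] nor induced by any valuation v via f ⪯ g ⇔ v(g) ≤ v(f). Concretely, the relation determined on monomials by 0 ≺ 1 ≺ X ≺ X² ≺ ⋯ ≺ Y ∼ XY ∼ X²Y ∼ ⋯ ∼ Y² ∼ ⋯ and rf ∼ f for nonzero real r, extended to polynomials by comparing their ⪯-largest monomials, has these properties. -/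
open MvPolynomial

/-- The quasi-order-like relation on `ℝ[X,Y]` determined on monomials by
`0 ≺ 1 ≺ X ≺ X² ≺ ⋯ ≺ Y ∼ XY ∼ X²Y ∼ ⋯ ∼ Y² ∼ ⋯` and `r·f ∼ f` for nonzero real `r`,
and on polynomials by comparing their largest monomials: `f ⪯ g` iff `f = 0`, or
`g ≠ 0` and either `g` involves `Y`, or neither involves `Y` and
`deg_X f ≤ deg_X g`. -/
def mqle (f g : MvPolynomial (Fin 2) ℝ) : Prop :=
  f = 0 ∨ (g ≠ 0 ∧
    (0 < degreeOf 1 g ∨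
      (degreeOf 1 f = 0 ∧ degreeOf 1 g = 0 ∧ degreeOf 0 f ≤ degreeOf 0 g)))

/-!
Send `0` to `⊥`, a nonzero polynomial in which `Y` occurs to `⊤`, and any other polynomial to
its degree in `X`. With values in `WithBot ℕ∞` this map `ν` is multiplicative and ultrametric,
and `f ⪯ g ↔ ν f ≤ ν g`; so `⪯` behaves like the relation of a valuation, and (Q3) holds because
`ν (g + h) = max (ν g) (ν h)` as soon as `ν g ≠ ν h`. But `WithBot ℕ∞` is not cancellative:
`ν (X * Y) = ν Y = ⊤` while `ν X = 1 ≠ 0 = ν 1`. A relation induced by a group-valued valuation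
would let us cancel the factor `Y` (as `Y ≻ 0`), which is impossible here. Additivity fails
because `1 ⪯ X` whereas `1 - X ⪯ X - X = 0` does not hold.
-/

theorem apply_add_eq_max_of_ne {G β : Type*} [AddCommGroup G] [LinearOrder β] {f : G → β}
    (neg : ∀ a, f (-a) = f a) (add_le : ∀ a b, f (a + b) ≤ max (f a) (f b)) {a b : G}
    (h : f a ≠ f b) : f (a + b) = max (f a) (f b) := by
  wlog hba : f b < f a generalizing a b
  · rw [add_comm, max_comm]
    exact this h.symm (h.lt_or_gt.resolve_right hba)
  refine (add_le a b).antisymm ?_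
  rw [max_eq_left hba.le]
  have := add_le (a + b) (-b)
  rw [add_neg_cancel_right, neg] at this
  exact (le_max_iff.1 this).resolve_right hba.not_ge

theorem rel_of_rel_mul_right {R Γ : Type*} [Mul R] [Zero R] [Add Γ] [LE Γ]
    [AddRightMono Γ] [AddRightReflectLE Γ] {rel : R → R → Prop} {v : R → WithTop Γ}
    (hv : ∀ f g, rel f g ↔ v g ≤ v f) (hmul : ∀ f g, v (f * g) = v f + v g) {a b c : R}
    (hc : ¬ rel c 0) (h : rel (a * c) (b * c)) : rel a b := by
  have hc_top : v c ≠ ⊤ := fun htop => hc ((hv c 0).2 (htop ▸ le_top))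
  rw [hv, hmul, hmul, WithTop.add_le_add_iff_right hc_top] at h
  exact (hv a b).2 h

namespace MvPolynomial

variable {σ R : Type*}

open scoped Classical in
noncomputable def degreeOfOrTop [CommSemiring R] (x y : σ) (p : MvPolynomial σ R) : WithBot ℕ∞ :=
  if p = 0 then ⊥ else ((if degreeOf y p = 0 then degreeOf x p else ⊤ : ℕ∞) : WithBot ℕ∞)

section CommSemiring

variable [CommSemiring R] {x y : σ} {p q : MvPolynomial σ R}

@[simp]
theorem degreeOfOrTop_zero : degreeOfOrTop x y (0 : MvPolynomial σ R) = ⊥ := if_pos rfl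

theorem degreeOfOrTop_of_degreeOf_ne_zero (hp : degreeOf y p ≠ 0) : degreeOfOrTop x y p = ⊤ := by
  have hp0 : p ≠ 0 := by rintro rfl; simp at hp
  simp [degreeOfOrTop, hp0, hp]

theorem degreeOfOrTop_of_degreeOf_eq_zero (hp0 : p ≠ 0) (hp : degreeOf y p = 0) :
    degreeOfOrTop x y p = (degreeOf x p : ℕ∞) := by
  simp [degreeOfOrTop, hp0, hp]

theorem degreeOfOrTop_add_le (p q : MvPolynomial σ R) :
    degreeOfOrTop x y (p + q) ≤ max (degreeOfOrTop x y p) (degreeOfOrTop x y q) := by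
  by_cases hp : p = 0
  · simp [hp]
  by_cases hq : q = 0
  · simp [hq]
  by_cases hpq : p + q = 0
  · simp [hpq]
  rcases eq_or_ne (degreeOf y p) 0 with hyp | hyp
  swap
  · rw [degreeOfOrTop_of_degreeOf_ne_zero hyp]; exact le_max_of_le_left le_top
  rcases eq_or_ne (degreeOf y q) 0 with hyq | hyq
  swap
  · rw [degreeOfOrTop_of_degreeOf_ne_zero hyq]; exact le_max_of_le_right le_top
  have hypq : degreeOf y (p + q) = 0 := by
    simpa [hyp, hyq] using degreeOf_add_le y p q
  rw [degreeOfOrTop_of_degreeOf_eq_zero hp hyp, degreeOfOrTop_of_degreeOf_eq_zero hq hyq,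
    degreeOfOrTop_of_degreeOf_eq_zero hpq hypq]
  have := degreeOf_add_le x p q
  rw [le_max_iff] at this ⊢
  exact_mod_cast this

theorem degreeOfOrTop_mul [NoZeroDivisors R] (p q : MvPolynomial σ R) :
    degreeOfOrTop x y (p * q) = degreeOfOrTop x y p + degreeOfOrTop x y q := by
  by_cases hp : p = 0
  · simp [hp]
  by_cases hq : q = 0
  · simp [hq]
  simp only [degreeOfOrTop, hp, hq, mul_ne_zero hp hq, if_false, degreeOf_mul_eq hp hq,
    Nat.add_eq_zero_iff, ← WithBot.coe_add, WithBot.coe_inj]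
  split_ifs <;> simp_all

variable (x y) in
@[simp]
theorem degreeOfOrTop_one [Nontrivial R] : degreeOfOrTop x y (1 : MvPolynomial σ R) = 0 := by
  simp [degreeOfOrTop]

@[simp]
theorem degreeOfOrTop_X_of_ne [Nontrivial R] (hxy : x ≠ y) :
    degreeOfOrTop x y (X x : MvPolynomial σ R) = 1 := by
  classical
  simp [degreeOfOrTop, degreeOf_X, hxy.symm]

variable (x y) in
@[simp]
theorem degreeOfOrTop_X_self [Nontrivial R] : degreeOfOrTop x y (X y : MvPolynomial σ R) = ⊤ := by
  classical
  exact degreeOfOrTop_of_degreeOf_ne_zero (by simp)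

end CommSemiring

variable [CommRing R] {x y : σ}

variable (x y) in
@[simp]
theorem degreeOfOrTop_neg (p : MvPolynomial σ R) :
    degreeOfOrTop x y (-p) = degreeOfOrTop x y p := by
  by_cases hp : p = 0 <;> simp [degreeOfOrTop, degreeOf_neg, hp]

theorem degreeOfOrTop_add_of_ne {p q : MvPolynomial σ R}
    (h : degreeOfOrTop x y p ≠ degreeOfOrTop x y q) :
    degreeOfOrTop x y (p + q) = max (degreeOfOrTop x y p) (degreeOfOrTop x y q) :=
  apply_add_eq_max_of_ne (degreeOfOrTop_neg x y) degreeOfOrTop_add_le h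

end MvPolynomial

local notation "ν" => degreeOfOrTop (σ := Fin 2) (R := ℝ) 0 1

theorem mqle_iff {f g : MvPolynomial (Fin 2) ℝ} : mqle f g ↔ ν f ≤ ν g := by
  unfold mqle degreeOfOrTop
  by_cases hf : f = 0
  · simp [hf]
  by_cases hg : g = 0
  · simp [hf, hg]
  simp only [hf, hg, if_false, WithBot.coe_le_coe]
  split_ifs <;> simp_all [Nat.pos_iff_ne_zero]

/-- There is a reflexive, transitive, total relation on `ℝ[X,Y]` satisfying (O1), (O2),
(O3) and (Q3) which is neither an order (it fails unrestricted additivity (O4)) nor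
induced by any valuation. -/
theorem counterexample_relation_on_polynomialRing :
    -- reflexive, transitive, total
    (∀ f : MvPolynomial (Fin 2) ℝ, mqle f f) ∧
    (∀ f g h : MvPolynomial (Fin 2) ℝ, mqle f g → mqle g h → mqle f h) ∧
    (∀ f g : MvPolynomial (Fin 2) ℝ, mqle f g ∨ mqle g f) ∧
    -- (O1)
    (mqle 0 1 ∧ ¬ mqle 1 0) ∧
    -- (O2)
    (∀ f g : MvPolynomial (Fin 2) ℝ, mqle (f * g) 0 → mqle f 0 ∨ mqle g 0) ∧
    -- (O3)
    (∀ f g h : MvPolynomial (Fin 2) ℝ, mqle f g → mqle 0 h → mqle (f * h) (g * h)) ∧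
    -- (Q3)
    (∀ f g h : MvPolynomial (Fin 2) ℝ,
      mqle f g → ¬ (mqle h g ∧ mqle g h) → mqle (f + h) (g + h)) ∧
    -- not an order: unrestricted additivity (O4) fails
    (¬ ∀ f g h : MvPolynomial (Fin 2) ℝ, mqle f g → mqle (f + h) (g + h)) ∧
    -- not induced by any valuation
    (∀ (Γ : Type) [AddCommGroup Γ] [LinearOrder Γ] [IsOrderedAddMonoid Γ]
        (v : MvPolynomial (Fin 2) ℝ → WithTop Γ),
      v 0 = ⊤ → v 1 = 0 →
      (∀ f g : MvPolynomial (Fin 2) ℝ, v (f * g) = v f + v g) →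
      (∀ f g : MvPolynomial (Fin 2) ℝ, min (v f) (v g) ≤ v (f + g)) →
      ¬ ∀ f g : MvPolynomial (Fin 2) ℝ, mqle f g ↔ v g ≤ v f) := by
  simp only [mqle_iff]
  refine ⟨fun _ => le_rfl, fun _ _ _ => le_trans, fun _ _ => le_total _ _, by simp,
    ?_, ?_, ?_, ?_, ?_⟩
  · intro f g hfg
    simpa [degreeOfOrTop_mul, WithBot.add_eq_bot] using hfg
  · intro f g h hfg _
    rw [degreeOfOrTop_mul, degreeOfOrTop_mul]
    gcongr
  · intro f g h hfg hgh
    have hne : ν g ≠ ν h := fun e => hgh ⟨e.ge, e.le⟩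
    calc ν (f + h) ≤ max (ν f) (ν h) := degreeOfOrTop_add_le f h
      _ ≤ max (ν g) (ν h) := max_le_max_right _ hfg
      _ = ν (g + h) := (degreeOfOrTop_add_of_ne hne).symm
  · intro H
    have := H 1 (X 0) (-X 0) (by simp)
    rw [add_neg_cancel, degreeOfOrTop_add_of_ne (by simp)] at this
    simp at this
  · intro Γ _ _ _ v _ _ hmul _ hv
    have hXY : ν (X 0 * X 1) ≤ ν (1 * X 1) := by simp [degreeOfOrTop_mul]
    have hX := rel_of_rel_mul_right hv hmul (by simp) hXY
    norm_num at hX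
end

section
/- Characterization theorem: Let R be a commutative ring with 1 and ⪯ a binary relation on R. Then (R, ⪯) is a quasi-ordered ring if and only if (R, ⪯) is either an ordered ring, or there exists a valuation v on R such that x ⪯ y ⇔ v(y) ≤ v(x). Moreover, the support of the quasi-order coincides with the support of the order, respectively of the valuation. -/
attribute [instance] RingValuation.grp RingValuation.ord RingValuation.isOrd

/-!
Everything is decided by the sign of `-1`.

If `-1 ≺ 0`, then `a ∼ -a` forces `a ∼ 0` (cancel `a` in `0 · a ⪯ (-1) · a`), and the
support is closed under addition: translate by `1`, which does not see the support, and back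
by `-1`, which is allowed by (QR4) since `-1 ≁ 1`. This is enough to treat the one case
`z ∼ y` that (QR4) leaves open, so (O4) holds and `⪯` is an ordering.

If `0 ⪯ -1`, then every element is nonnegative and `x ∼ -x` for all `x`, which turns (QR4) into
the ultrametric inequality `x ⪯ y → x + y ⪯ y`. Then `⪯` satisfies the axioms of a valuative
relation, and its canonical valuation, written additively, is the required valuation.
-/

section RingOrders

variable {R : Type*} [CommRing R]

structure IsRingQuasiOrder (le : R → R → Prop) : Prop where
  refl : ∀ x, le x x
  trans : ∀ x y z, le x y → le y z → le x z
  total : ∀ x y, le x y ∨ le y x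
  zero_le_one : le 0 1
  not_one_le_zero : ¬ le 1 0
  nonpos_or_nonpos_of_mul_nonpos : ∀ x y, le (x * y) 0 → le x 0 ∨ le y 0
  mul_le_mul_of_nonneg_right : ∀ x y z, le x y → le 0 z → le (x * z) (y * z)
  add_le_add_right_of_not_antisymmRel :
    ∀ x y z, le x y → ¬ AntisymmRel le z y → le (x + z) (y + z)
  le_of_mul_le_mul_right : ∀ x y z, le 0 z → ¬ le z 0 → le (x * z) (y * z) → le x y

structure IsRingOrder (le : R → R → Prop) : Prop where
  refl : ∀ x, le x x
  trans : ∀ x y z, le x y → le y z → le x z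
  total : ∀ x y, le x y ∨ le y x
  zero_le_one : le 0 1
  not_one_le_zero : ¬ le 1 0
  nonpos_or_nonpos_of_mul_nonpos : ∀ x y, le (x * y) 0 → le x 0 ∨ le y 0
  mul_le_mul_of_nonneg_right : ∀ x y z, le x y → le 0 z → le (x * z) (y * z)
  add_le_add_right : ∀ x y z, le x y → le (x + z) (y + z)

variable {le : R → R → Prop} {a b c : R}

theorem IsRingOrder.le_of_mul_le_mul_right (hO : IsRingOrder le) {x y z : R} (hz : ¬ le z 0)
    (h : le (x * z) (y * z)) : le x y := by
  have hxyz := hO.add_le_add_right _ _ (-(y * z)) h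
  rw [add_neg_cancel, ← sub_eq_add_neg, ← sub_mul] at hxyz
  have hxy : le (x - y) 0 := (hO.nonpos_or_nonpos_of_mul_nonpos _ _ hxyz).resolve_right hz
  simpa using hO.add_le_add_right _ _ y hxy

theorem IsRingOrder.isRingQuasiOrder (hO : IsRingOrder le) : IsRingQuasiOrder le where
  __ := hO
  add_le_add_right_of_not_antisymmRel x y z h _ := hO.add_le_add_right x y z h
  le_of_mul_le_mul_right _ _ _ _ hz h := hO.le_of_mul_le_mul_right hz h

namespace IsRingQuasiOrder

theorem antisymmRel_trans (hQ : IsRingQuasiOrder le) (hab : AntisymmRel le a b)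
    (hbc : AntisymmRel le b c) : AntisymmRel le a c :=
  ⟨hQ.trans _ _ _ hab.1 hbc.1, hQ.trans _ _ _ hbc.2 hab.2⟩

theorem add_antisymmRel_add (hQ : IsRingQuasiOrder le) (hab : AntisymmRel le a b)
    (hc : ¬ AntisymmRel le c b) : AntisymmRel le (a + c) (b + c) :=
  ⟨hQ.add_le_add_right_of_not_antisymmRel _ _ _ hab.1 hc,
    hQ.add_le_add_right_of_not_antisymmRel _ _ _ hab.2 fun hca =>
      hc (hQ.antisymmRel_trans hca hab)⟩

theorem add_antisymmRel_self_of_not_antisymmRel_zero (hQ : IsRingQuasiOrder le)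
    (hb : AntisymmRel le b 0) (ha : ¬ AntisymmRel le a 0) : AntisymmRel le (a + b) a := by
  simpa [add_comm] using hQ.add_antisymmRel_add hb ha

theorem zero_le_neg (hQ : IsRingQuasiOrder le) (ha : le a 0) : le 0 (-a) := by
  by_cases h : AntisymmRel le (-a) 0
  · exact h.2
  · simpa using hQ.add_le_add_right_of_not_antisymmRel _ _ _ ha h

theorem le_zero_of_le_neg (hQ : IsRingQuasiOrder le) (hA : ¬ le 0 (-1)) (ha : le 0 a)
    (h : le a (-a)) : le a 0 := by
  by_contra ha'
  exact hA (hQ.le_of_mul_le_mul_right 0 (-1) a ha ha' (by simpa using hQ.trans _ _ _ ha h))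

theorem antisymmRel_zero_of_antisymmRel_neg (hQ : IsRingQuasiOrder le) (hA : ¬ le 0 (-1))
    (h : AntisymmRel le a (-a)) : AntisymmRel le a 0 := by
  rcases hQ.total 0 a with ha | ha
  · exact ⟨hQ.le_zero_of_le_neg hA ha h.1, ha⟩
  · have hna : le (-a) 0 := hQ.le_zero_of_le_neg hA (hQ.zero_le_neg ha) (by simpa using h.2)
    exact ⟨ha, by simpa using hQ.zero_le_neg hna⟩

theorem add_antisymmRel_zero (hQ : IsRingQuasiOrder le) (hA : ¬ le 0 (-1))
    (ha : AntisymmRel le a 0) (hb : AntisymmRel le b 0) : AntisymmRel le (a + b) 0 := by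
  have h1 : ¬ AntisymmRel le 1 0 := fun h => hQ.not_one_le_zero h.1
  have h1a : AntisymmRel le (1 + a) 1 := hQ.add_antisymmRel_self_of_not_antisymmRel_zero ha h1
  have h1ab : AntisymmRel le (1 + a + b) 1 :=
    hQ.antisymmRel_trans (hQ.add_antisymmRel_self_of_not_antisymmRel_zero hb
      fun h => h1 (hQ.antisymmRel_trans h1a.symm h)) h1a
  have hneg : ¬ AntisymmRel le (-1) 1 := fun h => hA (hQ.trans _ _ _ hQ.zero_le_one h.2)
  have := hQ.add_antisymmRel_add h1ab hneg
  rwa [show 1 + a + b + -1 = a + b by ring, add_neg_cancel] at this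

theorem add_antisymmRel_self (hQ : IsRingQuasiOrder le) (hA : ¬ le 0 (-1))
    (hb : AntisymmRel le b 0) (a : R) : AntisymmRel le (a + b) a := by
  by_cases ha : AntisymmRel le a 0
  · exact hQ.antisymmRel_trans (hQ.add_antisymmRel_zero hA ha hb) ha.symm
  · exact hQ.add_antisymmRel_self_of_not_antisymmRel_zero hb ha

theorem add_le_add_right (hQ : IsRingQuasiOrder le) (hA : ¬ le 0 (-1)) {x y : R} (z : R)
    (hxy : le x y) : le (x + z) (y + z) := by
  by_cases hzy : AntisymmRel le z y
  swap
  · exact hQ.add_le_add_right_of_not_antisymmRel x y z hxy hzy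
  by_cases hz : AntisymmRel le z 0
  · exact hQ.trans _ _ _ (hQ.add_antisymmRel_self hA hz x).1
      (hQ.trans _ _ _ hxy (hQ.add_antisymmRel_self hA hz y).2)
  have hy : ¬ AntisymmRel le (-y) y := fun h =>
    hz (hQ.antisymmRel_trans hzy (hQ.antisymmRel_zero_of_antisymmRel_neg hA h.symm))
  have hxy' : le (x - y) 0 := by
    simpa [sub_eq_add_neg] using hQ.add_le_add_right_of_not_antisymmRel x y (-y) hxy hy
  rw [show x + z = (x - y) + (y + z) by ring]
  by_cases hyz : AntisymmRel le (y + z) 0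
  · exact hQ.trans _ _ _ (hQ.add_antisymmRel_self hA hyz _).1 (hQ.trans _ _ _ hxy' hyz.2)
  · simpa using hQ.add_le_add_right_of_not_antisymmRel _ _ (y + z) hxy' hyz

theorem isRingOrder (hQ : IsRingQuasiOrder le) (hA : ¬ le 0 (-1)) : IsRingOrder le where
  __ := hQ
  add_le_add_right _ _ z h := hQ.add_le_add_right hA z h

theorem zero_le (hQ : IsRingQuasiOrder le) (hB : le 0 (-1)) (x : R) : le 0 x := by
  rcases hQ.total 0 x with h | h
  · exact h
  · simpa using hQ.mul_le_mul_of_nonneg_right 0 (-x) (-1) (hQ.zero_le_neg h) hB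

theorem le_neg (hQ : IsRingQuasiOrder le) (hB : le 0 (-1)) (x : R) : le x (-x) := by
  have h : le 1 (-1) := by
    rcases hQ.total 1 (-1) with h | h
    · exact h
    · simpa using hQ.mul_le_mul_of_nonneg_right _ _ (-1) h hB
  simpa using hQ.mul_le_mul_of_nonneg_right 1 (-1) x h (hQ.zero_le hB x)

theorem add_le_of_le (hQ : IsRingQuasiOrder le) (hB : le 0 (-1)) (hab : le a b) :
    le (a + b) b := by
  by_contra hc
  have hb : le b (-(a + b)) :=
    hQ.trans _ _ _ ((hQ.total _ _).resolve_left hc) (hQ.le_neg hB _)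
  have ha : ¬ AntisymmRel le a (-(a + b)) := fun h =>
    hc (hQ.trans _ _ _ (hQ.trans _ _ _ (hQ.le_neg hB _) h.2) hab)
  have := hQ.add_le_add_right_of_not_antisymmRel _ _ a hb ha
  rw [add_comm, show -(a + b) + a = -b by ring] at this
  exact hc (hQ.trans _ _ _ this (by simpa using hQ.le_neg hB (-b)))

abbrev toValuativeRel (hQ : IsRingQuasiOrder le) (hB : le 0 (-1)) : ValuativeRel R where
  vle := le
  vle_total := hQ.total
  vle_trans hxy hyz := hQ.trans _ _ _ hxy hyz
  vle_add {x y _} hx hy := by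
    rcases hQ.total x y with h | h
    · exact hQ.trans _ _ _ (hQ.add_le_of_le hB h) hy
    · exact hQ.trans _ _ _ (add_comm x y ▸ hQ.add_le_of_le hB h) hx
  mul_vle_mul_left h z := hQ.mul_le_mul_of_nonneg_right _ _ z h (hQ.zero_le hB z)
  vle_mul_cancel hz h := hQ.le_of_mul_le_mul_right _ _ _ (hQ.zero_le hB _) hz h
  not_vle_one_zero := hQ.not_one_le_zero
  vle_mul_comm {x y} := mul_comm x y ▸ hQ.refl _

end IsRingQuasiOrder

end RingOrders

namespace RingValuation

section OfValuation

variable {Γ₀ : Type} [LinearOrderedCommGroupWithZero Γ₀]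

/-- `Γ₀ = Γ ∪ {0}` in additive notation: `0 ↦ ⊤`, and the order is reversed. -/
noncomputable def toAdditiveWithTop (a : Γ₀) : WithTop (Additive Γ₀ˣᵒᵈ) :=
  if h : a = 0 then ⊤
  else (Additive.ofMul (OrderDual.toDual (Units.mk0 a h)) : Additive Γ₀ˣᵒᵈ)

theorem toAdditiveWithTop_eq_top_iff {a : Γ₀} : toAdditiveWithTop a = ⊤ ↔ a = 0 := by
  unfold toAdditiveWithTop
  split_ifs with h <;> simp [h]

theorem toAdditiveWithTop_one : toAdditiveWithTop (1 : Γ₀) = 0 := by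
  simp [toAdditiveWithTop]

theorem toAdditiveWithTop_mul (a b : Γ₀) :
    toAdditiveWithTop (a * b) = toAdditiveWithTop a + toAdditiveWithTop b := by
  by_cases ha : a = 0
  · simp [toAdditiveWithTop, ha]
  by_cases hb : b = 0
  · simp [toAdditiveWithTop, hb]
  simp [toAdditiveWithTop, ha, hb, Units.mk0_mul]

theorem toAdditiveWithTop_le_iff {a b : Γ₀} :
    toAdditiveWithTop a ≤ toAdditiveWithTop b ↔ b ≤ a := by
  by_cases hb : b = 0
  · simp [toAdditiveWithTop, hb]
  by_cases ha : a = 0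
  · simp [toAdditiveWithTop, ha, hb]
  simp [toAdditiveWithTop, ha, hb, ← Units.val_le_val]

noncomputable def ofValuation {R : Type} [CommRing R] (v : Valuation R Γ₀) :
    RingValuation R where
  Γ := Additive Γ₀ˣᵒᵈ
  v x := toAdditiveWithTop (v x)
  map_zero := by simp [toAdditiveWithTop_eq_top_iff]
  map_one := by simp [toAdditiveWithTop_one]
  map_mul x y := by simp [toAdditiveWithTop_mul]
  map_add x y := by
    rw [min_le_iff, toAdditiveWithTop_le_iff, toAdditiveWithTop_le_iff, ← le_max_iff]
    exact v.map_add x y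

end OfValuation

variable {R : Type} [CommRing R]

theorem map_add_of_ne (V : RingValuation R) {x y : R} (h : V.v x ≠ V.v y) :
    V.v (x + y) = min (V.v x) (V.v y) :=
  (AddValuation.of V.v V.map_zero V.map_one V.map_add V.map_mul).map_add_of_distinct_val h

theorem isRingQuasiOrder (V : RingValuation R) :
    IsRingQuasiOrder fun x y => V.v y ≤ V.v x where
  refl _ := le_rfl
  trans _ _ _ hxy hyz := hyz.trans hxy
  total _ _ := le_total _ _
  zero_le_one := by simp [V.map_zero]
  not_one_le_zero := by simp [V.map_zero, V.map_one]
  nonpos_or_nonpos_of_mul_nonpos x y h := by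
    simpa [V.map_zero, V.map_mul, WithTop.add_eq_top] using h
  mul_le_mul_of_nonneg_right x y z h _ := by
    simpa only [V.map_mul] using add_le_add_left h (V.v z)
  add_le_add_right_of_not_antisymmRel x y z h hzy := by
    rw [V.map_add_of_ne fun e => hzy ⟨e.le, e.ge⟩]
    exact (min_le_min_right _ h).trans (V.map_add x z)
  le_of_mul_le_mul_right x y z _ hz h := by
    rw [V.map_mul, V.map_mul] at h
    exact (WithTop.add_le_add_iff_right fun e => hz (by simp [e])).mp h

end RingValuation

theorem IsRingQuasiOrder.exists_ringValuation {R : Type} [CommRing R] {le : R → R → Prop}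
    (hQ : IsRingQuasiOrder le) (hB : le 0 (-1)) :
    ∃ V : RingValuation R,
      (∀ x y : R, le x y ↔ V.v y ≤ V.v x) ∧
      (∀ x : R, V.v x = ⊤ ↔ (le x 0 ∧ le 0 x)) := by
  let := hQ.toValuativeRel hB
  refine ⟨RingValuation.ofValuation (ValuativeRel.valuation R), fun x y => ?_, fun x => ?_⟩
  · exact (Valuation.Compatible.vle_iff_le x y).trans
      RingValuation.toAdditiveWithTop_le_iff.symm
  · exact RingValuation.toAdditiveWithTop_eq_top_iff.trans
      (ValuativeRel.valuation_eq_zero_iff.trans ⟨fun h => ⟨h, hQ.zero_le hB x⟩, And.left⟩)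

/-- Characterization: `(R, ⪯)` is a quasi-ordered ring if and only if it is either an
ordered ring or else `⪯` is induced by a valuation on `R`; moreover the supports
coincide. -/
theorem quasiOrderedRing_characterization
    {R : Type} [CommRing R] (le : R → R → Prop) :
    -- `(R, ⪯)` is a quasi-ordered ring ...
    ((∀ x : R, le x x) ∧
     (∀ x y z : R, le x y → le y z → le x z) ∧
     (∀ x y : R, le x y ∨ le y x) ∧
     (le 0 1 ∧ ¬ le 1 0) ∧
     (∀ x y : R, le (x * y) 0 → le x 0 ∨ le y 0) ∧
     (∀ x y z : R, le x y → le 0 z → le (x * z) (y * z)) ∧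
     (∀ x y z : R, le x y → ¬ (le z y ∧ le y z) → le (x + z) (y + z)) ∧
     (∀ x y z : R, le 0 z → ¬ le z 0 → le (x * z) (y * z) → le x y))
    ↔
    -- ... iff it is an ordered ring ...
    (((∀ x : R, le x x) ∧
      (∀ x y z : R, le x y → le y z → le x z) ∧
      (∀ x y : R, le x y ∨ le y x) ∧
      (le 0 1 ∧ ¬ le 1 0) ∧
      (∀ x y : R, le (x * y) 0 → le x 0 ∨ le y 0) ∧
      (∀ x y z : R, le x y → le 0 z → le (x * z) (y * z)) ∧
      (∀ x y z : R, le x y → le (x + z) (y + z)))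
     ∨
     -- ... or `⪯` is induced by a valuation on `R` (supports coinciding)
     (∃ V : RingValuation R,
       (∀ x y : R, le x y ↔ V.v y ≤ V.v x) ∧
       (∀ x : R, V.v x = ⊤ ↔ (le x 0 ∧ le 0 x)))) := by
  constructor
  · rintro ⟨h₁, h₂, h₃, ⟨h₄, h₄'⟩, h₅, h₆, h₇, h₈⟩
    have hQ : IsRingQuasiOrder le := ⟨h₁, h₂, h₃, h₄, h₄', h₅, h₆, h₇, h₈⟩
    by_cases hB : le 0 (-1)
    · exact Or.inr (hQ.exists_ringValuation hB)
    · obtain ⟨-, -, -, -, -, -, -, h₉⟩ := hQ.isRingOrder hB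
      exact Or.inl ⟨h₁, h₂, h₃, ⟨h₄, h₄'⟩, h₅, h₆, h₉⟩
  · rintro (⟨h₁, h₂, h₃, ⟨h₄, h₄'⟩, h₅, h₆, h₇⟩ | ⟨V, hV, -⟩)
    · have hO : IsRingOrder le := ⟨h₁, h₂, h₃, h₄, h₄', h₅, h₆, h₇⟩
      obtain ⟨-, -, -, -, -, -, -, h₈, h₉⟩ := hO.isRingQuasiOrder
      exact ⟨h₁, h₂, h₃, ⟨h₄, h₄'⟩, h₅, h₆, h₈, h₉⟩
    · obtain rfl : le = fun x y => V.v y ≤ V.v x := funext₂ fun x y => propext (hV x y)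
      obtain ⟨h₁, h₂, h₃, h₄, h₄', h₅, h₆, h₇, h₈⟩ := V.isRingQuasiOrder
      exact ⟨h₁, h₂, h₃, ⟨h₄, h₄'⟩, h₅, h₆, h₇, h₈⟩
end
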